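/- arXiv:math/9810036 — 6 statements merged into one kernel-verified Lean document; each statement's English description precedes it below -/
import Mathlib

section
/- Let B ⊂ ℝ be an open interval, f a real polynomial of degree at most k, and ε > 0. Then the Lebesgue measure of {x ∈ B : |f(x)| < ε} is at most 2k(k+1)^{1/k} · (ε / sup_{x∈B}|f(x)|)^{1/k} · |B|. -/
/-!
Let `F = {x ∈ [a, b] : |p x| ≤ ε}` have measure `δ > 0`. Its distribution function
`u ↦ |F ∩ (-∞, u]|` is `1`-Lipschitz, so the right endpoints of its level sets at the heights
`i δ / (k + 1)`, `i = 0, …, k`, are `k + 1` points of `F` at mutual distance at least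
`δ / (k + 1)`. Lagrange interpolation at these nodes bounds `|p|` on `[a, b]` by
`(k + 1) ε ((k + 1) (b - a) / δ) ^ k`; solving for `δ` and using `k + 1 ≤ 2 k` gives the estimate.
-/

open MeasureTheory Set Polynomial

section DistributionFunction

lemma volume_inter_Iic_le_add (F : Set ℝ) (x y : ℝ) :
    volume (F ∩ Iic x) ≤ volume (F ∩ Iic y) + ENNReal.ofReal (x - y) := by
  have hsub : F ∩ Iic x ⊆ (F ∩ Iic y) ∪ Ioc y x := by
    rintro z ⟨hzF, hzx⟩
    rcases le_or_gt z y with hzy | hzy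
    · exact Or.inl ⟨hzF, hzy⟩
    · exact Or.inr ⟨hzy, hzx⟩
  calc volume (F ∩ Iic x) ≤ volume ((F ∩ Iic y) ∪ Ioc y x) := measure_mono hsub
    _ ≤ volume (F ∩ Iic y) + volume (Ioc y x) := measure_union_le _ _
    _ = volume (F ∩ Iic y) + ENNReal.ofReal (x - y) := by rw [Real.volume_Ioc]

variable {F : Set ℝ}

lemma monotone_toReal_volume_inter_Iic (hF : volume F ≠ ⊤) :
    Monotone fun u => (volume (F ∩ Iic u)).toReal := fun _ _ hxy =>
  ENNReal.toReal_mono (measure_ne_top_of_subset inter_subset_left hF)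
    (measure_mono (inter_subset_inter_right _ (Iic_subset_Iic.2 hxy)))

lemma lipschitzWith_one_toReal_volume_inter_Iic (hF : volume F ≠ ⊤) :
    LipschitzWith 1 fun u => (volume (F ∩ Iic u)).toReal := by
  refine LipschitzWith.of_le_add fun x y => ?_
  have hy : volume (F ∩ Iic y) ≠ ⊤ := measure_ne_top_of_subset inter_subset_left hF
  calc (volume (F ∩ Iic x)).toReal
      ≤ (volume (F ∩ Iic y) + ENNReal.ofReal (x - y)).toReal :=
        ENNReal.toReal_mono (by finiteness) (volume_inter_Iic_le_add F x y)
    _ = (volume (F ∩ Iic y)).toReal + max (x - y) 0 := by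
        rw [ENNReal.toReal_add hy ENNReal.ofReal_ne_top, ENNReal.toReal_ofReal']
    _ ≤ (volume (F ∩ Iic y)).toReal + dist x y := by
        gcongr
        exact max_le (le_abs_self _) (abs_nonneg _)

lemma mem_of_volume_inter_Iic_lt (hF : IsClosed F) {t : ℝ}
    (ht : ∀ u, t < u → volume (F ∩ Iic t) < volume (F ∩ Iic u)) : t ∈ F := by
  by_contra htF
  obtain ⟨u, htu, hu⟩ :=
    exists_Ico_subset_of_mem_nhds (hF.isOpen_compl.mem_nhds htF) ⟨t + 1, by linarith⟩
  have hsub : F ∩ Iic ((t + u) / 2) ⊆ F ∩ Iic t := by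
    rintro z ⟨hzF, hz⟩
    refine ⟨hzF, not_lt.1 fun htz => hu ⟨htz.le, ?_⟩ hzF⟩
    simp only [mem_Iic] at hz
    linarith
  exact (measure_mono hsub).not_gt (ht _ (by linarith))

end DistributionFunction

lemma Monotone.exists_isGreatest_preimage_singleton {g : ℝ → ℝ} (hmono : Monotone g)
    (hcont : Continuous g) {a b c : ℝ} (hab : a ≤ b) (ha : g a ≤ c) (hb : c < g b) :
    ∃ t, IsGreatest (g ⁻¹' {c}) t := by
  obtain ⟨x, -, hx⟩ := intermediate_value_Icc hab hcont.continuousOn ⟨ha, hb.le⟩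
  have hbdd : BddAbove (g ⁻¹' {c}) :=
    ⟨b, fun u hu => not_lt.1 fun hbu => (hmono hbu.le).not_gt (hu.symm ▸ hb)⟩
  exact ⟨_, (isClosed_singleton.preimage hcont).isGreatest_csSup ⟨x, hx⟩ hbdd⟩

theorem exists_separated_points {F : Set ℝ} {a b : ℝ} (hF : IsClosed F) (hFab : F ⊆ Icc a b)
    (hF0 : volume F ≠ 0) (n : ℕ) :
    ∃ t : Fin (n + 1) → ℝ, (∀ i, t i ∈ F) ∧
      ∀ i j, i ≠ j → (volume F).toReal / (n + 1) ≤ |t i - t j| := by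
  have hfin : volume F ≠ ⊤ := measure_ne_top_of_subset hFab measure_Icc_lt_top.ne
  set g : ℝ → ℝ := fun u => (volume (F ∩ Iic u)).toReal
  have hmono : Monotone g := monotone_toReal_volume_inter_Iic hfin
  have hlip : LipschitzWith 1 g := lipschitzWith_one_toReal_volume_inter_Iic hfin
  set δ := (volume F).toReal
  have hδ : 0 < δ := ENNReal.toReal_pos hF0 hfin
  obtain ⟨x₀, hx₀⟩ := nonempty_of_measure_ne_zero hF0
  have ga : g a = 0 := by
    have : F ∩ Iic a ⊆ {a} := fun z ⟨hzF, hza⟩ => le_antisymm hza (hFab hzF).1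
    show (volume (F ∩ Iic a)).toReal = 0
    rw [measure_mono_null this (measure_singleton a), ENNReal.toReal_zero]
  have gb : g b = δ := by
    show (volume (F ∩ Iic b)).toReal = δ
    rw [inter_eq_left.2 fun z hz => mem_Iic.2 (hFab hz).2]
  set c : Fin (n + 1) → ℝ := fun i => i * δ / (n + 1)
  have hlevel : ∀ i, ∃ t, IsGreatest (g ⁻¹' {c i}) t := by
    intro i
    refine hmono.exists_isGreatest_preimage_singleton hlip.continuous
      ((hFab hx₀).1.trans (hFab hx₀).2) (by rw [ga]; positivity) ?_
    rw [gb, div_lt_iff₀ (by positivity)]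
    have : (i : ℝ) < n + 1 := by exact_mod_cast i.isLt
    nlinarith
  choose t ht using hlevel
  refine ⟨t, fun i => mem_of_volume_inter_Iic_lt hF fun u hu => ?_, fun i j hij => ?_⟩
  · have hgu : c i < g u :=
      ((ht i).1.symm.trans_le (hmono hu.le)).lt_of_ne fun h => hu.not_ge ((ht i).2 h.symm)
    rw [← ENNReal.toReal_lt_toReal (measure_ne_top_of_subset inter_subset_left hfin)
      (measure_ne_top_of_subset inter_subset_left hfin)]
    exact (ht i).1.trans_lt hgu
  · have hij' : (1 : ℝ) ≤ |(i : ℝ) - j| := by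
      have : (1 : ℤ) ≤ |(i : ℤ) - j| :=
        Int.one_le_abs (sub_ne_zero.2 (by exact_mod_cast Fin.val_ne_of_ne hij))
      exact_mod_cast this
    calc δ / (n + 1) ≤ |(i : ℝ) - j| * (δ / (n + 1)) :=
          le_mul_of_one_le_left (by positivity) hij'
      _ = |c i - c j| := by
          rw [show c i - c j = (i - j) * (δ / (n + 1)) by simp only [c]; ring, abs_mul,
            abs_of_pos (by positivity : 0 < δ / (n + 1))]
      _ = dist (g (t i)) (g (t j)) := by rw [(ht i).1, (ht j).1, Real.dist_eq]
      _ ≤ dist (t i) (t j) := by simpa using hlip.dist_le_mul (t i) (t j)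
      _ = |t i - t j| := Real.dist_eq _ _

section Lagrange

open Finset

variable {ι : Type*} [DecidableEq ι] {s : Finset ι} {t : ι → ℝ} {d R x : ℝ}

lemma abs_eval_basis_le (hd : 0 < d) (hsep : ∀ i ∈ s, ∀ j ∈ s, i ≠ j → d ≤ |t i - t j|)
    (hx : ∀ j ∈ s, |x - t j| ≤ R) {i : ι} (hi : i ∈ s) :
    |(Lagrange.basis s t i).eval x| ≤ (R / d) ^ (#s - 1) := by
  rw [Lagrange.basis, eval_prod, abs_prod, ← card_erase_of_mem hi, ← prod_const]
  refine prod_le_prod (fun _ _ => abs_nonneg _) fun j hj => ?_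
  obtain ⟨hji, hj⟩ := mem_erase.1 hj
  rw [Lagrange.basisDivisor, eval_mul, eval_C, eval_sub, eval_X, eval_C, abs_mul, abs_inv,
    inv_mul_eq_div]
  exact div_le_div₀ ((abs_nonneg _).trans (hx j hj)) (hx j hj) hd (hsep i hi j hj hji.symm)

theorem abs_eval_le_of_separated_nodes {p : ℝ[X]} (hdeg : p.degree < #s) (hd : 0 < d)
    (hsep : ∀ i ∈ s, ∀ j ∈ s, i ≠ j → d ≤ |t i - t j|) (hx : ∀ j ∈ s, |x - t j| ≤ R) {ε : ℝ}
    (hε : ∀ i ∈ s, |p.eval (t i)| ≤ ε) :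
    |p.eval x| ≤ #s * ε * (R / d) ^ (#s - 1) := by
  have hinj : Set.InjOn t s := fun i hi j hj hij => by
    by_contra hne
    have := hsep i hi j hj hne
    rw [hij, sub_self, abs_zero] at this
    exact this.not_gt hd
  rw [Lagrange.eq_interpolate hinj hdeg, Lagrange.interpolate_apply, eval_finsetSum]
  calc |∑ i ∈ s, (C (p.eval (t i)) * Lagrange.basis s t i).eval x|
      ≤ ∑ i ∈ s, |p.eval (t i)| * |(Lagrange.basis s t i).eval x| := by
        refine (abs_sum_le_sum_abs _ _).trans_eq (sum_congr rfl fun i _ => ?_)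
        rw [eval_mul, eval_C, abs_mul]
    _ ≤ ∑ _i ∈ s, ε * (R / d) ^ (#s - 1) := by
        refine sum_le_sum fun i hi => ?_
        exact mul_le_mul (hε i hi) (abs_eval_basis_le hd hsep hx hi) (abs_nonneg _)
          ((abs_nonneg _).trans (hε i hi))
    _ = #s * ε * (R / d) ^ (#s - 1) := by rw [sum_const, nsmul_eq_mul, mul_assoc]

end Lagrange

theorem abs_eval_le_of_volume_sublevel_ne_zero {p : ℝ[X]} {k : ℕ} (hdeg : p.natDegree ≤ k)
    {a b ε x : ℝ} (hF0 : volume {y ∈ Icc a b | |p.eval y| ≤ ε} ≠ 0) (hx : x ∈ Icc a b) :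
    |p.eval x| ≤
      (k + 1) * ε * ((k + 1) * (b - a) / (volume {y ∈ Icc a b | |p.eval y| ≤ ε}).toReal) ^ k := by
  set F := {y ∈ Icc a b | |p.eval y| ≤ ε}
  have hF : IsClosed F := isClosed_Icc.inter (isClosed_le p.continuous.abs continuous_const)
  obtain ⟨t, htF, hsep⟩ := exists_separated_points hF (fun y hy => hy.1) hF0 k
  have hδ : 0 < (volume F).toReal :=
    ENNReal.toReal_pos hF0 (measure_ne_top_of_subset (fun y hy => hy.1) measure_Icc_lt_top.ne)
  have hdeg' : p.degree < (Finset.univ : Finset (Fin (k + 1))).card := by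
    rw [Finset.card_univ, Fintype.card_fin]
    exact degree_le_natDegree.trans_lt (by exact_mod_cast Nat.lt_succ_of_le hdeg)
  have := abs_eval_le_of_separated_nodes hdeg' (by positivity) (fun i _ j _ hij => hsep i j hij)
    (fun j _ => Real.dist_le_of_mem_Icc hx (htF j).1) fun i _ => (htF i).2
  simp only [Finset.card_univ, Fintype.card_fin, Nat.add_sub_cancel, Nat.cast_add_one] at this
  convert this using 3
  field_simp

lemma le_mul_rpow_of_le_mul_div_pow {k : ℕ} (hk : 0 < k) {δ L M ε : ℝ} (hδ : 0 < δ) (hL : 0 < L)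
    (hM : 0 < M) (hε : 0 ≤ ε) (h : M ≤ (k + 1) * ε * ((k + 1) * L / δ) ^ k) :
    δ ≤ 2 * k * ((k : ℝ) + 1) ^ ((1 : ℝ) / k) * (ε / M) ^ ((1 : ℝ) / k) * L := by
  have hpow : (δ / ((k + 1) * L)) ^ k ≤ (k + 1) * (ε / M) := by
    rw [div_pow, mul_div_assoc', le_div_iff₀ (by positivity)] at h
    rw [div_pow, div_le_iff₀ (by positivity), mul_div_assoc', div_mul_eq_mul_div,
      le_div_iff₀ hM]
    linarith
  have hroot : δ / ((k + 1) * L) ≤ ((k + 1) * (ε / M)) ^ ((1 : ℝ) / k) := by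
    rw [one_div, Real.le_rpow_inv_iff_of_pos (by positivity) (by positivity) (by positivity),
      Real.rpow_natCast]
    exact hpow
  have hk2 : (k : ℝ) + 1 ≤ 2 * k := by
    have : (1 : ℝ) ≤ k := by exact_mod_cast hk
    linarith
  calc δ = (k + 1) * L * (δ / ((k + 1) * L)) := by field_simp
    _ ≤ (k + 1) * L * ((k + 1) * (ε / M)) ^ ((1 : ℝ) / k) := by gcongr
    _ = (k + 1) * ((k : ℝ) + 1) ^ ((1 : ℝ) / k) * (ε / M) ^ ((1 : ℝ) / k) * L := by
        rw [Real.mul_rpow (by positivity) (by positivity)]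
        ring
    _ ≤ 2 * k * ((k : ℝ) + 1) ^ ((1 : ℝ) / k) * (ε / M) ^ ((1 : ℝ) / k) * L := by gcongr

theorem toReal_volume_sublevel_le {p : ℝ[X]} {k : ℕ} (hk : 0 < k) (hdeg : p.natDegree ≤ k)
    {a b ε : ℝ} (hab : a < b) (hF0 : volume {y ∈ Icc a b | |p.eval y| ≤ ε} ≠ 0)
    (hM : 0 < ⨆ x ∈ Ioo a b, |p.eval x|) :
    (volume {y ∈ Icc a b | |p.eval y| ≤ ε}).toReal ≤
      2 * k * ((k : ℝ) + 1) ^ ((1 : ℝ) / k) *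
        (ε / ⨆ x ∈ Ioo a b, |p.eval x|) ^ ((1 : ℝ) / k) * (b - a) := by
  obtain ⟨y, -, hyε⟩ := nonempty_of_measure_ne_zero hF0
  have hε : 0 ≤ ε := (abs_nonneg _).trans hyε
  have hδ : 0 < (volume {y ∈ Icc a b | |p.eval y| ≤ ε}).toReal :=
    ENNReal.toReal_pos hF0 (measure_ne_top_of_subset (fun y hy => hy.1) measure_Icc_lt_top.ne)
  refine le_mul_rpow_of_le_mul_div_pow hk hδ (sub_pos.2 hab) hM hε ?_
  exact Real.iSup_le (fun x => Real.iSup_le (fun hx =>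
    abs_eval_le_of_volume_sublevel_ne_zero hdeg hF0 (Ioo_subset_Icc_self hx)) (by positivity))
    (by positivity)

theorem stmt0_general (k : ℕ) (hk : 0 < k) (p : Polynomial ℝ) (hdeg : p.natDegree ≤ k)
    (a b : ℝ) (ε : ℝ) :
    volume {x ∈ Set.Ioo a b | |p.eval x| < ε} ≤
      ENNReal.ofReal (2 * k * ((k : ℝ) + 1) ^ ((1 : ℝ) / k)) *
        (ENNReal.ofReal ε / ENNReal.ofReal (⨆ x ∈ Set.Ioo a b, |p.eval x|)) ^ ((1 : ℝ) / k) *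
        volume (Set.Ioo a b) := by
  set M := ⨆ x ∈ Set.Ioo a b, |p.eval x|
  set E := {x ∈ Set.Ioo a b | |p.eval x| < ε}
  set F := {x ∈ Icc a b | |p.eval x| ≤ ε}
  obtain hE0 | hE0 := eq_or_ne (volume E) 0
  · rw [hE0]
    exact zero_le
  obtain ⟨x₀, hx₀, hx₀ε⟩ := nonempty_of_measure_ne_zero hE0
  have hε : 0 < ε := (abs_nonneg _).trans_lt hx₀ε
  have hab : a < b := hx₀.1.trans hx₀.2
  have hEF : E ⊆ F := fun x hx => ⟨Ioo_subset_Icc_self hx.1, hx.2.le⟩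
  have hF0 : volume F ≠ 0 := fun h => hE0 (measure_mono_null hEF h)
  have hM0 : 0 ≤ M := Real.iSup_nonneg fun x => Real.iSup_nonneg fun _ => abs_nonneg _
  obtain hM | hM := hM0.eq_or_lt
  · rw [← hM, ENNReal.ofReal_zero, ENNReal.div_zero (ENNReal.ofReal_pos.2 hε).ne',
      ENNReal.top_rpow_of_pos (by positivity),
      ENNReal.mul_top (ENNReal.ofReal_pos.2 (by positivity)).ne', Real.volume_Ioo,
      ENNReal.top_mul (ENNReal.ofReal_pos.2 (sub_pos.2 hab)).ne']
    exact le_top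
  calc volume E ≤ volume F := measure_mono hEF
    _ = ENNReal.ofReal (volume F).toReal :=
        (ENNReal.ofReal_toReal (measure_ne_top_of_subset (fun y hy => hy.1)
          measure_Icc_lt_top.ne)).symm
    _ ≤ ENNReal.ofReal
          (2 * k * ((k : ℝ) + 1) ^ ((1 : ℝ) / k) * (ε / M) ^ ((1 : ℝ) / k) * (b - a)) :=
        ENNReal.ofReal_le_ofReal (toReal_volume_sublevel_le hk hdeg hab hF0 hM)
    _ = _ := by
        rw [Real.volume_Ioo, ← ENNReal.ofReal_div_of_pos hM,
          ENNReal.ofReal_rpow_of_nonneg (by positivity) (by positivity),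
          ← ENNReal.ofReal_mul (by positivity), ← ENNReal.ofReal_mul (by positivity)]

/-- Let B ⊂ ℝ be an open interval, f a real polynomial of degree at most k,
and ε > 0. Then |{x ∈ B : |f(x)| < ε}| ≤ 2k(k+1)^{1/k} · (ε / sup_{x∈B}|f(x)|)^{1/k} · |B|.
The quotient is taken in `ℝ≥0∞`, so that ε/0 = ∞ and the bound holds trivially when f ≡ 0 on B. -/
theorem stmt0 (k : ℕ) (hk : 0 < k) (p : Polynomial ℝ) (hdeg : p.natDegree ≤ k)
    (a b : ℝ) (ε : ℝ) (hε : 0 < ε) :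
    volume {x ∈ Set.Ioo a b | |p.eval x| < ε} ≤
      ENNReal.ofReal (2 * k * ((k : ℝ) + 1) ^ ((1 : ℝ) / k)) *
        (ENNReal.ofReal ε / ENNReal.ofReal (⨆ x ∈ Set.Ioo a b, |p.eval x|)) ^ ((1 : ℝ) / k) *
        volume (Set.Ioo a b) :=
  stmt0_general k hk p hdeg a b ε
end

section
/- Let ε > 0, y ∈ ℝ^n, and (p,q) ∈ ℤ × ℤ^n satisfy |q·y + p| · Π₊(q) ≤ Π₊(q)^{-ε}, where Π₊(q) = ∏ᵢ max(|qᵢ|,1). Set r = Π₊(q)^{-ε/(n+1)} and define tᵢ > 0 by max(|qᵢ|,1) = r·e^{tᵢ} (assuming Π₊(q) large enough that each tᵢ > 0). Then the lattice g_t Λ_y contains a nonzero vector of sup-norm at most r, i.e. δ(g_t Λ_y) ≤ r. -/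
open MeasureTheory

/-- `δ(Λ) = inf_{v ∈ Λ, v ≠ 0} ‖v‖_∞` (the sup-norm is the norm of the pi type). -/
noncomputable def latDelta {k : ℕ} (Lam : Set (Fin k → ℝ)) : ℝ :=
  ⨅ v : {v : Fin k → ℝ // v ∈ Lam ∧ v ≠ 0}, ‖v.1‖

/-- The lattice `Λ_y ⊂ ℝ^{n+1}` of vectors `(q·y + p, q₁, …, qₙ)`, `p ∈ ℤ`, `q ∈ ℤⁿ`. -/
def lat {n : ℕ} (y : Fin n → ℝ) : Set (Fin (n + 1) → ℝ) :=
  {v | ∃ (p : ℤ) (q : Fin n → ℤ),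
    v = Fin.cons ((∑ i, (q i : ℝ) * y i) + (p : ℝ)) (fun i => (q i : ℝ))}

/-- The action of `g_t = diag(e^t, e^{-t₁}, …, e^{-tₙ})` on `ℝ^{n+1}`, where `t = Σᵢ tᵢ`. -/
noncomputable def gAct {n : ℕ} (t : Fin n → ℝ) (v : Fin (n + 1) → ℝ) : Fin (n + 1) → ℝ :=
  Fin.cons (Real.exp (∑ i, t i) * v 0) (fun i => Real.exp (-t i) * v i.succ)

/-- Lemma 2.1: if `|q·y + p| · Π₊(q) ≤ Π₊(q)^{-ε}`, `r = Π₊(q)^{-ε/(n+1)}`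
and `tᵢ > 0` is defined by `max(|qᵢ|,1) = r·e^{tᵢ}`, then `δ(g_t Λ_y) ≤ r`. -/
theorem stmt4 {n : ℕ} (ε : ℝ) (hε : 0 < ε) (y : Fin n → ℝ) (p : ℤ) (q : Fin n → ℤ)
    (happrox : |(∑ i, (q i : ℝ) * y i) + (p : ℝ)| * (∏ i, max |(q i : ℝ)| 1) ≤
      (∏ i, max |(q i : ℝ)| 1) ^ (-ε))
    (r : ℝ) (hr : r = (∏ i, max |(q i : ℝ)| 1) ^ (-ε / (n + 1)))
    (t : Fin n → ℝ) (ht : ∀ i, 0 < t i)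
    (hti : ∀ i, max |(q i : ℝ)| 1 = r * Real.exp (t i)) :
    latDelta (gAct t '' lat y) ≤ r := by
  set P : ℝ := ∏ i, max |(q i : ℝ)| 1 with hPdef
  have hP1 : (1 : ℝ) ≤ P := by
    rw [hPdef]
    calc (1 : ℝ) = ∏ _i : Fin n, (1 : ℝ) := by simp
      _ ≤ _ := Finset.prod_le_prod (fun i _ => zero_le_one) (fun i _ => le_max_right _ _)
  have hP0 : (0 : ℝ) < P := lt_of_lt_of_le one_pos hP1
  have hr0 : (0 : ℝ) < r := hr ▸ Real.rpow_pos_of_pos hP0 _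
  have hprod : P = r ^ n * Real.exp (∑ i, t i) := by
    rw [hPdef]
    simp_rw [hti]
    rw [Finset.prod_mul_distrib, Finset.prod_const, Real.exp_sum]
    simp
  have hrn1 : r ^ (n + 1) = P ^ (-ε) := by
    rw [hr, ← Real.rpow_natCast (P ^ (-ε / (n + 1))) (n + 1), ← Real.rpow_mul hP0.le]
    congr 1
    push_cast
    field_simp
  set α : ℝ := (∑ i, (q i : ℝ) * y i) + (p : ℝ) with hαdef
  have hcoord0 : Real.exp (∑ i, t i) * |α| ≤ r := by
    have he : Real.exp (∑ i, t i) = P / r ^ n := by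
      rw [hprod]; field_simp
    rw [he, div_mul_eq_mul_div, div_le_iff₀ (pow_pos hr0 n)]
    calc P * |α| = |α| * P := mul_comm _ _
      _ ≤ P ^ (-ε) := happrox
      _ = r ^ (n + 1) := hrn1.symm
      _ = r * r ^ n := by ring
  have hcoordi : ∀ i, Real.exp (-t i) * |(q i : ℝ)| ≤ r := by
    intro i
    have h1 : |(q i : ℝ)| ≤ r * Real.exp (t i) := (hti i) ▸ le_max_left _ _
    calc Real.exp (-t i) * |(q i : ℝ)| ≤ Real.exp (-t i) * (r * Real.exp (t i)) := by
          exact mul_le_mul_of_nonneg_left h1 (Real.exp_nonneg _)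
      _ = r * (Real.exp (-t i) * Real.exp (t i)) := by ring
      _ = r := by rw [← Real.exp_add]; simp
  set v : Fin (n + 1) → ℝ := Fin.cons α (fun i => (q i : ℝ)) with hvdef
  have hvlat : v ∈ lat y := ⟨p, q, rfl⟩
  have hbdd : BddBelow (Set.range fun w : {w : Fin (n+1) → ℝ // w ∈ gAct t '' lat y ∧ w ≠ 0} => ‖w.1‖) := by
    refine ⟨0, ?_⟩
    rintro x ⟨w, rfl⟩
    exact norm_nonneg _
  have hnorm : ‖gAct t v‖ ≤ r := by
    rw [pi_norm_le_iff_of_nonneg hr0.le]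
    intro i
    refine Fin.cases ?_ ?_ i
    · simp only [gAct, Fin.cons_zero, hvdef, Real.norm_eq_abs, abs_mul,
        abs_of_pos (Real.exp_pos _)]
      exact hcoord0
    · intro j
      simp only [gAct, Fin.cons_succ, hvdef, Real.norm_eq_abs, abs_mul,
        abs_of_pos (Real.exp_pos _)]
      exact hcoordi j
  by_cases hv0 : v = 0
  · -- degenerate case: q = 0, p = 0
    have hq0 : ∀ i, (q i : ℝ) = 0 := by
      intro i
      have := congrFun hv0 i.succ
      simpa [hvdef] using this
    have hPone : P = 1 := by
      rw [hPdef]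
      apply Finset.prod_eq_one
      intro i _
      rw [hq0 i]; simp
    have hrone : r = 1 := by rw [hr, hPone, Real.one_rpow]
    rcases n with _ | m
    · -- n = 0 : use the vector (1)
      set w : Fin 1 → ℝ := Fin.cons ((∑ i : Fin 0, ((0:ℤ) : ℝ) * y i) + ((1:ℤ) : ℝ))
        (fun i => ((0:ℤ) : ℝ)) with hwdef
      have hwlat : w ∈ lat y := ⟨1, 0, rfl⟩
      have hwne : gAct t w ≠ 0 := by
        intro h
        have := congrFun h 0
        simp [gAct, hwdef] at this
      refine ciInf_le_of_le hbdd ⟨gAct t w, ⟨w, hwlat, rfl⟩, hwne⟩ ?_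
      rw [hrone, pi_norm_le_iff_of_nonneg zero_le_one]
      intro i
      fin_cases i
      simp [gAct, hwdef]
    · exact absurd ((Real.exp_eq_one_iff _).mp (by
        have := hti 0
        rw [hq0 0, hrone] at this
        simpa using this.symm)) (ne_of_gt (ht 0))
  · have hgne : gAct t v ≠ 0 := by
      intro h
      apply hv0
      funext i
      refine Fin.cases ?_ ?_ i
      · have := congrFun h 0
        simp only [gAct, Fin.cons_zero, Pi.zero_apply, mul_eq_zero] at this
        rcases this with h' | h'
        · exact absurd h' (Real.exp_ne_zero _)
        · simpa using h'
      · intro j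
        have := congrFun h j.succ
        simp only [gAct, Fin.cons_succ, Pi.zero_apply, mul_eq_zero] at this
        rcases this with h' | h'
        · exact absurd h' (Real.exp_ne_zero _)
        · simpa using h'
    exact ciInf_le_of_le hbdd ⟨gAct t v, ⟨v, hvlat, rfl⟩, hgne⟩ hnorm
end

section
/- If y ∈ ℝ^n is very well multiplicatively approximable, then there exists γ > 0 such that there are infinitely many t ∈ ℤ₊ⁿ with δ(g_t Λ_y) ≤ e^{-γ·(t₁+⋯+tₙ)}. -/
/-!
Given `q` with `|q·y + p| ≤ Π₊(q)^{-(1+ε)}`, put `L = log Π₊(q)` and flow for the integer times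
`tᵢ = ⌈log max(|qᵢ|, 1) + cL⌉` with `c = ε/(4n)`. This contracts every coordinate `qᵢ` to size
`≤ e^{-cL}`, while the expansion `e^{Σtᵢ} ≤ e^{(1 + nc)L + n}` of the first coordinate is beaten by
`|q·y + p| ≤ e^{-(1+ε)L}` once `L` is large. Hence `δ(g_t Λ_y) ≤ e^{-cL} ≤ e^{-γ Σtᵢ}` with
`γ = c/(1+ε)`, since `Σtᵢ ≤ (1+ε)L`. As `Σtᵢ ≥ L`, each `t` arises from finitely many `q`, so
infinitely many `q` give infinitely many `t`.
-/

open MeasureTheory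

/-- `y ∈ ℝⁿ` is very well multiplicatively approximable: for some `ε > 0` there are
infinitely many `q ∈ ℤⁿ` with `|q·y + p| · Π₊(q) ≤ Π₊(q)^{-ε}` for some `p ∈ ℤ`. -/
def VWMA {n : ℕ} (y : Fin n → ℝ) : Prop :=
  ∃ ε : ℝ, 0 < ε ∧
    {q : Fin n → ℤ | ∃ p : ℤ,
      |(∑ i, (q i : ℝ) * y i) + (p : ℝ)| * (∏ i, max |(q i : ℝ)| 1) ≤
        (∏ i, max |(q i : ℝ)| 1) ^ (-ε)}.Infinite

section Height

variable {n : ℕ}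

noncomputable def heightPlus (q : Fin n → ℤ) : ℝ := ∏ i, max |(q i : ℝ)| 1

noncomputable def logHeight (q : Fin n → ℤ) : ℝ := Real.log (heightPlus q)

lemma one_le_heightPlus (q : Fin n → ℤ) : 1 ≤ heightPlus q :=
  Finset.one_le_prod fun _ _ => le_max_right _ _

lemma heightPlus_pos (q : Fin n → ℤ) : 0 < heightPlus q :=
  one_pos.trans_le (one_le_heightPlus q)

lemma abs_le_heightPlus (q : Fin n → ℤ) (i : Fin n) : |(q i : ℝ)| ≤ heightPlus q :=
  Finset.le_prod_max_one (Finset.mem_univ i) fun i => |(q i : ℝ)|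

lemma logHeight_nonneg (q : Fin n → ℤ) : 0 ≤ logHeight q :=
  Real.log_nonneg (one_le_heightPlus q)

@[simp]
lemma logHeight_zero : logHeight (0 : Fin n → ℤ) = 0 := by
  simp [logHeight, heightPlus]

lemma sum_log_max_abs_one (q : Fin n → ℤ) :
    ∑ i, Real.log (max |(q i : ℝ)| 1) = logHeight q :=
  (Real.log_prod fun _ _ => (one_pos.trans_le (le_max_right _ _)).ne').symm

lemma finite_setOf_heightPlus_le (B : ℝ) : {q : Fin n → ℤ | heightPlus q ≤ B}.Finite := by
  refine (Set.finite_Icc (-fun _ => ⌈B⌉) fun _ => ⌈B⌉).subset fun q hq => ?_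
  have hqi : ∀ i, |q i| ≤ ⌈B⌉ := fun i => by
    have : (|q i| : ℝ) ≤ ⌈B⌉ := ((abs_le_heightPlus q i).trans hq).trans (Int.le_ceil B)
    exact_mod_cast this
  exact ⟨fun i => neg_le_of_abs_le (hqi i), fun i => le_of_abs_le (hqi i)⟩

lemma finite_setOf_logHeight_le (B : ℝ) : {q : Fin n → ℤ | logHeight q ≤ B}.Finite :=
  (finite_setOf_heightPlus_le (Real.exp B)).subset fun q hq =>
    (Real.log_le_iff_le_exp (heightPlus_pos q)).1 hq

end Height

section ApproxTime

variable {n : ℕ} {c : ℝ}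

noncomputable def approxTime (c : ℝ) (q : Fin n → ℤ) (i : Fin n) : ℕ :=
  ⌈Real.log (max |(q i : ℝ)| 1) + c * logHeight q⌉₊

lemma log_add_le_approxTime (c : ℝ) (q : Fin n → ℤ) (i : Fin n) :
    Real.log (max |(q i : ℝ)| 1) + c * logHeight q ≤ approxTime c q i :=
  Nat.le_ceil _

lemma sum_approxTime_le (hc : 0 ≤ c) (q : Fin n → ℤ) :
    ∑ i, (approxTime c q i : ℝ) ≤ (1 + n * c) * logHeight q + n := by
  have hlt : ∀ i, (approxTime c q i : ℝ) < Real.log (max |(q i : ℝ)| 1) + c * logHeight q + 1 :=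
    fun i => Nat.ceil_lt_add_one (add_nonneg (Real.log_nonneg (le_max_right _ _))
      (mul_nonneg hc (logHeight_nonneg q)))
  calc ∑ i, (approxTime c q i : ℝ)
      ≤ ∑ i, (Real.log (max |(q i : ℝ)| 1) + c * logHeight q + 1) :=
        Finset.sum_le_sum fun i _ => (hlt i).le
    _ = (1 + n * c) * logHeight q + n := by
        simp only [Finset.sum_add_distrib, sum_log_max_abs_one, Finset.sum_const,
          Finset.card_univ, Fintype.card_fin, nsmul_eq_mul]
        ring

lemma logHeight_le_sum_approxTime (hc : 0 ≤ c) (q : Fin n → ℤ) :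
    logHeight q ≤ ∑ i, (approxTime c q i : ℝ) := by
  calc logHeight q ≤ logHeight q + n * (c * logHeight q) :=
        le_add_of_nonneg_right (by have := logHeight_nonneg q; positivity)
    _ = ∑ i, (Real.log (max |(q i : ℝ)| 1) + c * logHeight q) := by
        simp [Finset.sum_add_distrib, sum_log_max_abs_one]
    _ ≤ ∑ i, (approxTime c q i : ℝ) :=
        Finset.sum_le_sum fun i _ => log_add_le_approxTime c q i

lemma Set.Infinite.image_approxTime (hc : 0 ≤ c) {S : Set (Fin n → ℤ)} (hS : S.Infinite) :
    (approxTime c '' S).Infinite := fun himage =>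
  hS <| himage.of_finite_fibers _ fun t _ =>
    (finite_setOf_logHeight_le (∑ i, (t i : ℝ))).subset fun q ⟨_, hq⟩ => by
      simpa [show approxTime c q = t from hq] using logHeight_le_sum_approxTime hc q

end ApproxTime

section Lattice

variable {n : ℕ}

lemma latDelta_le_norm {k : ℕ} {Λ : Set (Fin k → ℝ)} {v : Fin k → ℝ} (hv : v ∈ Λ) (hv0 : v ≠ 0) :
    latDelta Λ ≤ ‖v‖ :=
  ciInf_le ⟨0, by rintro _ ⟨w, rfl⟩; exact norm_nonneg _⟩
    (⟨v, hv, hv0⟩ : {v : Fin k → ℝ // v ∈ Λ ∧ v ≠ 0})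

lemma gAct_ne_zero (t : Fin n → ℝ) {v : Fin (n + 1) → ℝ} {i : Fin n} (hi : v i.succ ≠ 0) :
    gAct t v ≠ 0 := fun h => by
  simpa [gAct, Real.exp_ne_zero, hi] using congrFun h i.succ

lemma norm_gAct_le {t : Fin n → ℝ} {v : Fin (n + 1) → ℝ} {r : ℝ} (hr : 0 ≤ r)
    (h0 : |Real.exp (∑ i, t i) * v 0| ≤ r) (hs : ∀ i, |Real.exp (-t i) * v i.succ| ≤ r) :
    ‖gAct t v‖ ≤ r := by
  refine (pi_norm_le_iff_of_nonneg hr).2 fun i => ?_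
  rw [Real.norm_eq_abs]
  induction i using Fin.cases with
  | zero => simpa [gAct] using h0
  | succ j => simpa [gAct] using hs j

end Lattice

section Contraction

variable {n : ℕ} {c ε : ℝ}

lemma latDelta_gAct_approxTime_le {y : Fin n → ℝ} {q : Fin n → ℤ} {p : ℤ} (hc : 0 ≤ c)
    (hp : |(∑ i, (q i : ℝ) * y i) + p| * heightPlus q ≤ heightPlus q ^ (-ε))
    (hL0 : 0 < logHeight q) (hL : n + (n + 2) * c * logHeight q ≤ ε * logHeight q) :
    latDelta (gAct (fun i => (approxTime c q i : ℝ)) '' lat y) ≤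
      Real.exp (-c * logHeight q) := by
  have hq0 : q ≠ 0 := by rintro rfl; simp at hL0
  obtain ⟨i₀, hi₀⟩ := Function.ne_iff.1 hq0
  set L := logHeight q
  set t := approxTime c q
  set a := (∑ i, (q i : ℝ) * y i) + p
  have hv : (Fin.cons a fun i => (q i : ℝ) : Fin (n + 1) → ℝ) ∈ lat y := ⟨p, q, rfl⟩
  refine (latDelta_le_norm (Set.mem_image_of_mem _ hv)
    (gAct_ne_zero _ (i := i₀) (by simpa using hi₀))).trans
    (norm_gAct_le (Real.exp_pos _).le ?_ fun i => ?_)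
  · have ha : |a| * Real.exp L ≤ Real.exp (L * -ε) := by
      rwa [Real.exp_mul, show Real.exp L = heightPlus q from Real.exp_log (heightPlus_pos q)]
    have hT := sum_approxTime_le hc q
    have hcL : 0 ≤ c * L := mul_nonneg hc hL0.le
    calc |Real.exp (∑ i, (t i : ℝ)) * a|
        = Real.exp (∑ i, (t i : ℝ) - L) * (|a| * Real.exp L) := by
          rw [abs_mul, Real.abs_exp, Real.exp_sub]; field_simp
      _ ≤ Real.exp (∑ i, (t i : ℝ) - L) * Real.exp (L * -ε) := by gcongr
      _ = Real.exp (∑ i, (t i : ℝ) - L - ε * L) := by rw [← Real.exp_add]; ring_nf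
      _ ≤ Real.exp (-c * L) := Real.exp_le_exp.2 (by linarith)
  · calc |Real.exp (-(t i : ℝ)) * (q i : ℝ)|
        ≤ Real.exp (-(t i : ℝ)) * max |(q i : ℝ)| 1 := by
          rw [abs_mul, Real.abs_exp]; gcongr; exact le_max_left _ _
      _ = Real.exp (-(t i : ℝ) + Real.log (max |(q i : ℝ)| 1)) := by
          rw [Real.exp_add, Real.exp_log (one_pos.trans_le (le_max_right _ _))]
      _ ≤ Real.exp (-c * L) :=
          Real.exp_le_exp.2 (by linarith [log_add_le_approxTime c q i])

lemma mul_sum_approxTime_le (hc : 0 ≤ c) (hε : 0 < ε) {q : Fin n → ℤ}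
    (hL : n + (n + 2) * c * logHeight q ≤ ε * logHeight q) :
    c / (1 + ε) * ∑ i, (approxTime c q i : ℝ) ≤ c * logHeight q := by
  have hT : ∑ i, (approxTime c q i : ℝ) ≤ (1 + ε) * logHeight q := by
    linarith [sum_approxTime_le hc q, mul_nonneg hc (logHeight_nonneg q)]
  calc c / (1 + ε) * ∑ i, (approxTime c q i : ℝ) ≤ c / (1 + ε) * ((1 + ε) * logHeight q) := by
        gcongr
    _ = c * logHeight q := by field_simp

end Contraction

/-- Corollary 2.2: if `y` is VWMA then for some `γ > 0` there are infinitely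
many `t ∈ ℤ₊ⁿ` with `δ(g_t Λ_y) ≤ e^{-γ(t₁+⋯+tₙ)}`. -/
theorem stmt5 {n : ℕ} (y : Fin n → ℝ) (h : VWMA y) :
    ∃ γ : ℝ, 0 < γ ∧
      {t : Fin n → ℕ |
        latDelta (gAct (fun i => (t i : ℝ)) '' lat y) ≤
          Real.exp (-γ * ∑ i, (t i : ℝ))}.Infinite := by
  obtain ⟨ε, hε, hinf⟩ := h
  rcases n.eq_zero_or_pos with rfl | hn
  · exact absurd hinf (Set.toFinite _).not_infinite
  set c := ε / (4 * n)
  have hc : 0 < c := by positivity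
  have hlarge : ∀ q : Fin n → ℤ, 4 * n / ε < logHeight q →
      n + (n + 2) * c * logHeight q ≤ ε * logHeight q := fun q hq => by
    have h1 : (1 : ℝ) ≤ n := by exact_mod_cast hn
    have h4 : 4 * n < ε * logHeight q := by rwa [div_lt_iff₀' hε] at hq
    have hcL : n * c * logHeight q = ε * logHeight q / 4 := by simp only [c]; field_simp
    linarith [mul_nonneg (sub_nonneg.2 h1) (mul_nonneg hc.le (logHeight_nonneg q))]
  refine ⟨c / (1 + ε), by positivity,
    ((hinf.sdiff (finite_setOf_logHeight_le (4 * n / ε))).image_approxTime hc.le).mono ?_⟩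
  rintro _ ⟨q, ⟨⟨p, hp⟩, hq⟩, rfl⟩
  have hq : 4 * n / ε < logHeight q := not_le.1 hq
  calc _ ≤ Real.exp (-c * logHeight q) :=
        latDelta_gAct_approxTime_le hc.le hp ((by positivity : (0 : ℝ) ≤ _).trans_lt hq)
          (hlarge q hq)
    _ ≤ _ := Real.exp_le_exp.2 (by linarith [mul_sum_approxTime_le hc.le hε (hlarge q hq)])
end

section
/- Let Γ be a discrete subgroup of ℝ^k, v ∈ ℝ^k not in the ℝ-span of Γ, and Λ ⊂ ℝ^k a discrete subgroup containing Γ and v whose ℝ-span equals span(Γ) + ℝv. Then ‖Λ‖ ≤ k·‖Γ‖·‖v‖. -/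
/-! Extend a `ℤ`-basis `g` of `Γ` by `v`: since `v ∉ span ℝ Γ`, the family `(g, v)` is
`ℝ`-independent and lies in `Λ`, so it is an integer combination of a `ℤ`-basis of `Λ` with
nonzero, hence at least unit, determinant. Every Plücker coordinate of `Λ` is therefore bounded
by the corresponding one of `(g, v)`, and Laplace expansion along `v` bounds these by
`(j + 1) ‖Γ‖ ‖v‖ ≤ k ‖Γ‖ ‖v‖`. -/

/-- The Plücker coordinate at `e_I` of `v₁ ∧ ⋯ ∧ v_j`: the determinant of the `j × j`
matrix of the coordinates of `v₁, …, v_j` in the (sorted) positions `I`.  For `j = 0`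
this is the empty determinant `1`, matching the convention `‖{0}‖ = 1`. -/
noncomputable def multiCoord {k j : ℕ} (v : Fin j → (Fin k → ℝ)) (I : Finset (Fin k))
    (hI : I.card = j) : ℝ :=
  Matrix.det (Matrix.of fun s t => v s ((I.orderIsoOfFin hI t : Fin k)))

/-- The norm `‖Γ‖` of a discrete subgroup with ℤ-basis `v₁, …, v_j`: the sup-norm of
the coefficients of `v₁ ∧ ⋯ ∧ v_j` in the standard basis of `⋀^j(ℝ^k)`. -/
noncomputable def subgroupNorm {k j : ℕ} (v : Fin j → (Fin k → ℝ)) : ℝ :=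
  ⨆ I : {s : Finset (Fin k) // s.card = j}, |multiCoord v I.1 I.2|

open Module Submodule

section IntegerBasis

variable {E ι : Type*}

theorem span_int_range_coe_basis [AddCommGroup E] {L : Submodule ℤ E} (b : Basis ι ℤ L) :
    span ℤ (Set.range fun i => (b i : E)) = L := by
  have hrange : (Set.range fun i => (b i : E)) = L.subtype '' Set.range b := by
    rw [← Set.range_comp]; rfl
  rw [hrange, ← map_span, b.span_eq, Submodule.map_top, range_subtype]

/-- For a discrete subgroup the `ℝ`-rank of its span equals its `ℤ`-rank. -/
theorem linearIndependent_real_coe_basis [NormedAddCommGroup E] [NormedSpace ℝ E]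
    [FiniteDimensional ℝ E] [Fintype ι] {L : Submodule ℤ E} [DiscreteTopology L]
    (b : Basis ι ℤ L) : LinearIndependent ℝ fun i => (b i : E) := by
  have hℤ : LinearIndependent ℤ fun i => (b i : E) :=
    b.linearIndependent.map' L.subtype (ker_subtype L)
  have hdisc : DiscreteTopology (span ℤ (Set.range fun i => (b i : E))) := by
    rwa [span_int_range_coe_basis b]
  rw [linearIndependent_iff_card_eq_finrank_span, Real.finrank_eq_int_finrank_of_discrete hdisc,
    Set.finrank, finrank_span_eq_card hℤ]

end IntegerBasis

theorem Matrix.det_ne_zero_of_linearIndependent {K M ι : Type*} [Field K] [AddCommGroup M]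
    [Module K M] [Fintype ι] [DecidableEq ι] (A : Matrix ι ι K) (w : ι → M)
    (h : LinearIndependent K fun s => ∑ t, A s t • w t) : A.det ≠ 0 := by
  intro hdet
  obtain ⟨c, hc0, hc⟩ := Matrix.exists_vecMul_eq_zero_iff.mpr hdet
  refine hc0 (funext (Fintype.linearIndependent_iff.mp h c ?_))
  have hcol : ∀ t, ∑ s, c s * A s t = 0 := fun t => congrFun hc t
  simp_rw [Finset.smul_sum, smul_smul]
  rw [Finset.sum_comm]
  simp_rw [← Finset.sum_smul, hcol, zero_smul, Finset.sum_const_zero]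

section PluckerCoordinates

variable {k n : ℕ}

theorem multiCoord_linearCombination (A : Matrix (Fin n) (Fin n) ℝ) (w : Fin n → Fin k → ℝ)
    (I : Finset (Fin k)) (hI : I.card = n) :
    multiCoord (fun s => ∑ t, A s t • w t) I hI = A.det * multiCoord w I hI := by
  rw [multiCoord, multiCoord, ← Matrix.det_mul]
  congr 1
  ext s t
  simp [Matrix.mul_apply, Finset.sum_apply]

theorem card_erase_orderEmbOfFin (I : Finset (Fin k)) (hI : I.card = n + 1) (t : Fin (n + 1)) :
    (I.erase (I.orderEmbOfFin hI t)).card = n := by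
  rw [Finset.card_erase_of_mem (I.orderEmbOfFin_mem hI t), hI, Nat.add_sub_cancel]

theorem orderEmbOfFin_succAbove (I : Finset (Fin k)) (hI : I.card = n + 1) (t : Fin (n + 1))
    (u : Fin n) :
    I.orderEmbOfFin hI (t.succAbove u) =
      (I.erase (I.orderEmbOfFin hI t)).orderEmbOfFin (card_erase_orderEmbOfFin I hI t) u := by
  refine congrFun (Finset.orderEmbOfFin_unique _ (fun u => ?_)
    ((I.orderEmbOfFin hI).strictMono.comp (Fin.strictMono_succAbove t))) u
  exact Finset.mem_erase.mpr ⟨fun h => Fin.succAbove_ne t u ((I.orderEmbOfFin hI).injective h),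
    I.orderEmbOfFin_mem hI _⟩

theorem multiCoord_snoc (g : Fin n → Fin k → ℝ) (v : Fin k → ℝ) (I : Finset (Fin k))
    (hI : I.card = n + 1) :
    multiCoord (Fin.snoc g v : Fin (n + 1) → Fin k → ℝ) I hI =
      ∑ t : Fin (n + 1), (-1) ^ (n + t : ℕ) * v (I.orderEmbOfFin hI t) *
        multiCoord g (I.erase (I.orderEmbOfFin hI t)) (card_erase_orderEmbOfFin I hI t) := by
  rw [multiCoord, Matrix.det_succ_row _ (Fin.last n)]
  refine Finset.sum_congr rfl fun t _ => ?_
  simp [multiCoord, Matrix.submatrix, orderEmbOfFin_succAbove]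

theorem abs_multiCoord_le_subgroupNorm (v : Fin n → Fin k → ℝ) (I : Finset (Fin k))
    (hI : I.card = n) : |multiCoord v I hI| ≤ subgroupNorm v :=
  le_ciSup (f := fun I : {s : Finset (Fin k) // s.card = n} => |multiCoord v I.1 I.2|)
    (Set.finite_range _).bddAbove ⟨I, hI⟩

theorem subgroupNorm_nonneg (v : Fin n → Fin k → ℝ) : 0 ≤ subgroupNorm v :=
  Real.iSup_nonneg fun _ => abs_nonneg _

theorem subgroupNorm_le {v : Fin n → Fin k → ℝ} {C : ℝ} (hC : 0 ≤ C)
    (h : ∀ I hI, |multiCoord v I hI| ≤ C) : subgroupNorm v ≤ C :=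
  Real.iSup_le (fun I => h I.1 I.2) hC

theorem abs_multiCoord_snoc_le (g : Fin n → Fin k → ℝ) (v : Fin k → ℝ) (I : Finset (Fin k))
    (hI : I.card = n + 1) :
    |multiCoord (Fin.snoc g v : Fin (n + 1) → Fin k → ℝ) I hI| ≤
      (n + 1) * subgroupNorm g * ‖v‖ := by
  rw [multiCoord_snoc]
  refine (Finset.abs_sum_le_sum_abs _ _).trans ?_
  calc ∑ t : Fin (n + 1), |(-1) ^ (n + t : ℕ) * v (I.orderEmbOfFin hI t) *
          multiCoord g (I.erase (I.orderEmbOfFin hI t)) (card_erase_orderEmbOfFin I hI t)|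
      ≤ ∑ _t : Fin (n + 1), ‖v‖ * subgroupNorm g := by
        refine Finset.sum_le_sum fun t _ => ?_
        rw [abs_mul, abs_mul, abs_pow, abs_neg, abs_one, one_pow, one_mul]
        exact mul_le_mul (norm_le_pi_norm v _) (abs_multiCoord_le_subgroupNorm g _ _)
          (abs_nonneg _) (norm_nonneg v)
    _ = (n + 1) * subgroupNorm g * ‖v‖ := by
        rw [Finset.sum_const, Finset.card_univ, Fintype.card_fin, nsmul_eq_mul]
        push_cast
        ring

theorem subgroupNorm_snoc_le (g : Fin n → Fin k → ℝ) (v : Fin k → ℝ) :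
    subgroupNorm (Fin.snoc g v : Fin (n + 1) → Fin k → ℝ) ≤ k * subgroupNorm g * ‖v‖ := by
  have hg := subgroupNorm_nonneg g
  refine subgroupNorm_le (by positivity) fun I hI => (abs_multiCoord_snoc_le g v I hI).trans ?_
  have hnk : n + 1 ≤ k := hI ▸ I.card_le_univ.trans_eq (Fintype.card_fin k)
  gcongr
  exact_mod_cast hnk

theorem subgroupNorm_le_of_mem_span_int (w u : Fin n → Fin k → ℝ) (hu : LinearIndependent ℝ u)
    (huw : ∀ s, u s ∈ span ℤ (Set.range w)) : subgroupNorm w ≤ subgroupNorm u := by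
  choose c hc using fun s => (mem_span_range_iff_exists_fun ℤ).mp (huw s)
  let A : Matrix (Fin n) (Fin n) ℤ := Matrix.of c
  have hu_eq : u = fun s => ∑ t, A.map (Int.cast : ℤ → ℝ) s t • w t := by
    funext s
    simp [A, ← hc s, Int.cast_smul_eq_zsmul]
  have hdet : A.det ≠ 0 := by
    have := (A.map (Int.cast : ℤ → ℝ)).det_ne_zero_of_linearIndependent w (hu_eq ▸ hu)
    rwa [← Int.cast_det, Int.cast_ne_zero] at this
  refine subgroupNorm_le (subgroupNorm_nonneg u) fun I hI => ?_
  calc |multiCoord w I hI|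
      ≤ |(A.det : ℝ)| * |multiCoord w I hI| :=
        le_mul_of_one_le_left (abs_nonneg _) (by exact_mod_cast Int.one_le_abs hdet)
    _ = |multiCoord u I hI| := by
        rw [hu_eq, multiCoord_linearCombination, Int.cast_det, abs_mul]
    _ ≤ subgroupNorm u := abs_multiCoord_le_subgroupNorm u I hI

end PluckerCoordinates

theorem stmt6_general {k : ℕ} (Γ Λ : AddSubgroup (Fin k → ℝ))
    (hΓd : DiscreteTopology Γ)
    (v : Fin k → ℝ) (hv : v ∉ Submodule.span ℝ (Γ : Set (Fin k → ℝ)))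
    (hΓΛ : Γ ≤ Λ) (hvΛ : v ∈ Λ)
    {j : ℕ} (bΓ : Module.Basis (Fin j) ℤ (AddSubgroup.toIntSubmodule Γ))
    (bΛ : Module.Basis (Fin (j + 1)) ℤ (AddSubgroup.toIntSubmodule Λ)) :
    subgroupNorm (fun s => ((bΛ s : AddSubgroup.toIntSubmodule Λ) : Fin k → ℝ)) ≤
      k * subgroupNorm (fun s => ((bΓ s : AddSubgroup.toIntSubmodule Γ) : Fin k → ℝ)) * ‖v‖ := by
  have : DiscreteTopology (AddSubgroup.toIntSubmodule Γ) := hΓd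
  set g : Fin j → Fin k → ℝ := fun s => (bΓ s : Fin k → ℝ)
  have hvg : v ∉ span ℝ (Set.range g) := by
    rwa [← span_span_of_tower ℤ, span_int_range_coe_basis bΓ, AddSubgroup.coe_toIntSubmodule]
  have hu : LinearIndependent ℝ (Fin.snoc g v : Fin (j + 1) → Fin k → ℝ) :=
    linearIndependent_finSnoc.mpr ⟨linearIndependent_real_coe_basis bΓ, hvg⟩
  have huΛ : ∀ s, (Fin.snoc g v : Fin (j + 1) → Fin k → ℝ) s ∈
      span ℤ (Set.range fun s => (bΛ s : Fin k → ℝ)) := by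
    rw [span_int_range_coe_basis bΛ]
    refine Fin.lastCases ?_ fun s => ?_
    · simp only [Fin.snoc_last]; exact hvΛ
    · simp only [Fin.snoc_castSucc]; exact hΓΛ (bΓ s).2
  exact (subgroupNorm_le_of_mem_span_int _ _ hu huΛ).trans (subgroupNorm_snoc_le g v)

/-- Lemma 5.1: if `Γ` is a discrete subgroup of `ℝ^k`, `v ∈ ℝ^k` is not in
the ℝ-span of `Γ`, and `Λ` is a discrete subgroup containing `Γ` and `v` whose ℝ-span is
`span(Γ) + ℝv`, then `‖Λ‖ ≤ k·‖Γ‖·‖v‖` (norms of subgroups computed from ℤ-bases,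
`‖v‖` being the sup-norm). -/
theorem stmt6 {k : ℕ} (Γ Λ : AddSubgroup (Fin k → ℝ))
    (hΓd : DiscreteTopology Γ) (hΛd : DiscreteTopology Λ)
    (v : Fin k → ℝ) (hv : v ∉ Submodule.span ℝ (Γ : Set (Fin k → ℝ)))
    (hΓΛ : Γ ≤ Λ) (hvΛ : v ∈ Λ)
    (hspan : Submodule.span ℝ (Λ : Set (Fin k → ℝ)) =
      Submodule.span ℝ (Γ : Set (Fin k → ℝ)) ⊔ Submodule.span ℝ {v})
    {j : ℕ} (bΓ : Module.Basis (Fin j) ℤ (AddSubgroup.toIntSubmodule Γ))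
    (bΛ : Module.Basis (Fin (j + 1)) ℤ (AddSubgroup.toIntSubmodule Λ)) :
    subgroupNorm (fun s => ((bΛ s : AddSubgroup.toIntSubmodule Λ) : Fin k → ℝ)) ≤
      k * subgroupNorm (fun s => ((bΓ s : AddSubgroup.toIntSubmodule Γ) : Fin k → ℝ)) * ‖v‖ :=
  stmt6_general Γ Λ hΓd v hv hΓΛ hvΛ bΓ bΛ
end

section
/- Let V ⊂ ℝ be open, k ≥ 1, and f ∈ C^k(V) with |∂^β f| ≤ A₁ on V for all orders β ≤ k and |f^{(k)}(x)| ≥ A₂ for all x ∈ V. Then for any open interval B ⊂ V and any ε > 0, |{x ∈ B : |f(x)| < ε}| ≤ C_{k,A₁,A₂} · (ε / sup_{x∈B}|f(x)|)^{1/k} · |B|, where C_{k,A₁,A₂} = k(k+1)·((A₁/A₂)(k+1)(2k^k+1))^{1/k}. -/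
/-!
Let `E = {x ∈ B | |f x| < ε}` and `m = |E|`. A set of measure `m > 2kh` contains `k + 1` points
pairwise at distance `≥ h` (greedily: `j ≤ k` such points cover at most `2jh` of it by
`h`-balls); take `h = m / (2k + 2)`. Rolle's theorem, iterated, gives the mean value theorem for
divided differences, so at these `k + 1` points `A₂ ≤ |f⁽ᵏ⁾(ξ)| ≤ (k + 1)! ε / hᵏ`, and the
interpolation error formula at `k` of them gives
`sup_B |f| ≤ k ε (|B| / h)ᵏ⁻¹ + A₁ |B|ᵏ / k!`. Together, `mᵏ · sup_B |f| ≤ Cᵏ ε |B|ᵏ`.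
-/

open MeasureTheory Set Polynomial
open scoped Finset Nat

namespace Polynomial

theorem contDiff_eval (p : ℝ[X]) (n : WithTop ℕ∞) : ContDiff ℝ n fun x => p.eval x := by
  simpa using p.contDiff_aeval (𝕜 := ℝ) n

theorem iteratedDeriv_eval (p : ℝ[X]) (n : ℕ) :
    iteratedDeriv n (fun x => p.eval x) = fun x => (derivative^[n] p).eval x := by
  induction n generalizing p with
  | zero => rfl
  | succ n ih =>
    rw [iteratedDeriv_succ', Function.iterate_succ_apply, ← ih]
    congr 1
    ext x
    exact p.deriv

theorem iteratedDeriv_eval_of_natDegree_le {p : ℝ[X]} {n : ℕ} (hp : p.natDegree ≤ n) (x : ℝ) :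
    iteratedDeriv n (fun x => p.eval x) x = n ! * p.coeff n := by
  have hdeg : (derivative^[n] p).natDegree ≤ 0 := by
    have := p.natDegree_iterate_derivative n
    omega
  rw [iteratedDeriv_eval, eq_C_of_natDegree_le_zero hdeg]
  simp [coeff_iterate_derivative, Nat.descFactorial_self]

end Polynomial

section Interpolation

variable {I : Set ℝ}

theorem exists_iteratedDeriv_eq_zero (hI : IsOpen I) (hIc : I.OrdConnected) {n : ℕ}
    {g : ℝ → ℝ} (hg : ContDiffOn ℝ n g I) {s : Finset ℝ} (hs : #s = n + 1) (hsI : ↑s ⊆ I)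
    (hgs : ∀ x ∈ s, g x = 0) : ∃ ξ ∈ I, iteratedDeriv n g ξ = 0 := by
  induction n generalizing g s with
  | zero =>
    obtain ⟨x, rfl⟩ := Finset.card_eq_one.mp hs
    exact ⟨x, hsI (by simp), by simpa using hgs x (by simp)⟩
  | succ n ih =>
    set x := s.orderEmbOfFin hs
    have hxs (i) : x i ∈ s := s.orderEmbOfFin_mem hs i
    have hrolle (i : Fin (n + 1)) : ∃ c ∈ Ioo (x i.castSucc) (x i.succ), deriv g c = 0 :=
      exists_deriv_eq_zero (x.strictMono i.castSucc_lt_succ)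
        (hg.continuousOn.mono (hIc.out (hsI (hxs _)) (hsI (hxs _))))
        ((hgs _ (hxs _)).trans (hgs _ (hxs _)).symm)
    choose y hy hy0 using hrolle
    have hymono : StrictMono y :=
      Fin.strictMono_iff_lt_succ.mpr fun i => (hy i.castSucc).2.trans (hy i.succ).1
    have hyI (i) : y i ∈ I :=
      hIc.out (hsI (hxs _)) (hsI (hxs _)) (Ioo_subset_Icc_self (hy i))
    obtain ⟨ξ, hξ, hξ0⟩ := ih (hg.deriv_of_isOpen hI (by norm_cast))
      (s := Finset.univ.map ⟨y, hymono.injective⟩) (by simp)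
      (by simpa [Set.range_subset_iff] using hyI) (by simpa using hy0)
    exact ⟨ξ, hξ, by rwa [iteratedDeriv_succ']⟩

theorem exists_iteratedDeriv_eq_iteratedDeriv (hI : IsOpen I) (hIc : I.OrdConnected) {n : ℕ}
    {f g : ℝ → ℝ} (hf : ContDiffOn ℝ n f I) (hg : ContDiffOn ℝ n g I) {s : Finset ℝ}
    (hs : #s = n + 1) (hsI : ↑s ⊆ I) (hfg : ∀ x ∈ s, f x = g x) :
    ∃ ξ ∈ I, iteratedDeriv n f ξ = iteratedDeriv n g ξ := by
  obtain ⟨ξ, hξ, hξ0⟩ := exists_iteratedDeriv_eq_zero hI hIc (hf.sub hg) hs hsI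
    fun x hx => sub_eq_zero.mpr (hfg x hx)
  refine ⟨ξ, hξ, sub_eq_zero.mp ?_⟩
  rwa [← iteratedDeriv_sub ((hf ξ hξ).contDiffAt (hI.mem_nhds hξ))
    ((hg ξ hξ).contDiffAt (hI.mem_nhds hξ))]

theorem exists_iteratedDeriv_eq_factorial_mul_sum (hI : IsOpen I) (hIc : I.OrdConnected) {n : ℕ}
    {f : ℝ → ℝ} (hf : ContDiffOn ℝ n f I) {s : Finset ℝ} (hs : #s = n + 1) (hsI : ↑s ⊆ I) :
    ∃ ξ ∈ I, iteratedDeriv n f ξ = n ! * ∑ x ∈ s, f x / ∏ y ∈ s.erase x, (x - y) := by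
  have hinj : Set.InjOn id (s : Set ℝ) := injOn_id _
  set p := Lagrange.interpolate s id f
  have hnode : ∀ x ∈ s, p.eval x = f x := fun x hx => Lagrange.eval_interpolate_at_node f hinj hx
  obtain ⟨ξ, hξ, hξeq⟩ := exists_iteratedDeriv_eq_iteratedDeriv hI hIc hf
    (p.contDiff_eval n).contDiffOn hs hsI fun x hx => (hnode x hx).symm
  have hp : p.natDegree ≤ n := by
    have := Lagrange.degree_interpolate_le f hinj
    rw [hs, Nat.add_sub_cancel] at this
    exact natDegree_le_of_degree_le this
  have hcoeff := Lagrange.coeff_eq_sum hinj (Lagrange.degree_interpolate_lt f hinj)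
  rw [hs, Nat.add_sub_cancel] at hcoeff
  refine ⟨ξ, hξ, ?_⟩
  rw [hξeq, iteratedDeriv_eval_of_natDegree_le hp, hcoeff]
  congr 1
  exact Finset.sum_congr rfl fun x hx => by rw [id, hnode x hx]; rfl

theorem exists_eq_eval_interpolate_add (hI : IsOpen I) (hIc : I.OrdConnected) {n : ℕ}
    {f : ℝ → ℝ} (hf : ContDiffOn ℝ n f I) {s : Finset ℝ} (hs : #s = n) (hsI : ↑s ⊆ I) {y : ℝ}
    (hy : y ∈ I) :
    ∃ ξ ∈ I, f y = (Lagrange.interpolate s id f).eval y +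
      iteratedDeriv n f ξ / n ! * ∏ x ∈ s, (y - x) := by
  have hinj : Set.InjOn id (s : Set ℝ) := injOn_id _
  set p := Lagrange.interpolate s id f
  have hnode : ∀ x ∈ s, p.eval x = f x := fun x hx => Lagrange.eval_interpolate_at_node f hinj hx
  by_cases hys : y ∈ s
  · exact ⟨y, hy, by rw [hnode y hys, Finset.prod_eq_zero hys (sub_self y), mul_zero, add_zero]⟩
  set N := ∏ x ∈ s, (y - x)
  have hN : N ≠ 0 := Finset.prod_ne_zero_iff.mpr fun x hx =>
    sub_ne_zero.mpr (ne_of_mem_of_not_mem hx hys).symm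
  set c := (f y - p.eval y) / N
  set r := p + C c * Lagrange.nodal s id
  have hp : p.degree < n := hs ▸ Lagrange.degree_interpolate_lt f hinj
  have hnodal : (Lagrange.nodal s id).natDegree = n := by rw [Lagrange.natDegree_nodal, hs]
  have hr_deg : r.natDegree ≤ n := natDegree_add_le_of_degree_le
    (natDegree_le_of_degree_le hp.le) ((natDegree_C_mul_le _ _).trans hnodal.le)
  have hr_coeff : r.coeff n = c := by
    rw [coeff_add, coeff_C_mul, coeff_eq_zero_of_degree_lt hp, ← hnodal,
      Lagrange.nodal_monic.coeff_natDegree, zero_add, mul_one]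
  have hfr : ∀ x ∈ insert y s, f x = r.eval x := by
    simp only [Finset.forall_mem_insert]
    refine ⟨?_, fun x hx => ?_⟩
    · simp only [r, eval_add, eval_mul, eval_C, Lagrange.eval_nodal, id]
      rw [div_mul_cancel₀ _ hN]
      ring
    · simp only [r, eval_add, eval_mul, eval_C, Lagrange.eval_nodal, id,
        Finset.prod_eq_zero hx (sub_self x), mul_zero, add_zero, hnode x hx]
  obtain ⟨ξ, hξ, hξeq⟩ := exists_iteratedDeriv_eq_iteratedDeriv hI hIc hf
    (r.contDiff_eval n).contDiffOn (by rw [Finset.card_insert_of_notMem hys, hs])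
    (by simpa [insert_subset_iff] using ⟨hy, hsI⟩) hfr
  rw [iteratedDeriv_eval_of_natDegree_le hr_deg, hr_coeff] at hξeq
  refine ⟨ξ, hξ, ?_⟩
  rw [hξeq, mul_div_cancel_left₀ _ (by positivity), div_mul_cancel₀ _ hN]
  ring

end Interpolation

section SeparatedNodes

variable {s : Finset ℝ} {f : ℝ → ℝ} {ε h : ℝ}

theorem abs_sum_div_prod_sub_le (hh : 0 < h) (hsep : (s : Set ℝ).Pairwise fun x y => h ≤ |x - y|)
    (hf : ∀ x ∈ s, |f x| ≤ ε) :
    |∑ x ∈ s, f x / ∏ y ∈ s.erase x, (x - y)| ≤ #s * (ε / h ^ (#s - 1)) := by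
  calc |∑ x ∈ s, f x / ∏ y ∈ s.erase x, (x - y)|
      ≤ ∑ x ∈ s, |f x / ∏ y ∈ s.erase x, (x - y)| := Finset.abs_sum_le_sum_abs _ _
    _ ≤ ∑ x ∈ s, ε / h ^ (#s - 1) := Finset.sum_le_sum fun x hx => ?_
    _ = #s * (ε / h ^ (#s - 1)) := by rw [Finset.sum_const, nsmul_eq_mul]
  rw [abs_div, Finset.abs_prod, ← Finset.card_erase_of_mem hx, ← Finset.prod_const]
  refine div_le_div₀ ((abs_nonneg _).trans (hf x hx)) (hf x hx) (by positivity)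
    (Finset.prod_le_prod (fun _ _ => hh.le) fun y hy => ?_)
  exact hsep hx (Finset.mem_of_mem_erase hy) (Finset.ne_of_mem_erase hy).symm

theorem abs_eval_interpolate_le {L y : ℝ} (hh : 0 < h)
    (hsep : (s : Set ℝ).Pairwise fun x y => h ≤ |x - y|) (hf : ∀ x ∈ s, |f x| ≤ ε)
    (hy : ∀ x ∈ s, |y - x| ≤ L) :
    |(Lagrange.interpolate s id f).eval y| ≤ #s * (ε * (L / h) ^ (#s - 1)) := by
  rw [Lagrange.interpolate_apply, eval_finsetSum]
  calc |∑ x ∈ s, (C (f x) * Lagrange.basis s id x).eval y|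
      ≤ ∑ x ∈ s, |(C (f x) * Lagrange.basis s id x).eval y| := Finset.abs_sum_le_sum_abs _ _
    _ ≤ ∑ x ∈ s, ε * (L / h) ^ (#s - 1) := Finset.sum_le_sum fun x hx => ?_
    _ = #s * (ε * (L / h) ^ (#s - 1)) := by rw [Finset.sum_const, nsmul_eq_mul]
  rw [eval_mul, eval_C, abs_mul, Lagrange.basis, eval_prod, Finset.abs_prod,
    ← Finset.card_erase_of_mem hx, ← Finset.prod_const]
  refine mul_le_mul (hf x hx) (Finset.prod_le_prod (fun _ _ => abs_nonneg _) fun z hz => ?_)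
    (Finset.prod_nonneg fun _ _ => abs_nonneg _) ((abs_nonneg _).trans (hf x hx))
  rw [Lagrange.basisDivisor, eval_mul, eval_C, eval_sub, eval_X, eval_C, abs_mul, abs_inv,
    inv_mul_eq_div, id, id]
  have hzs := Finset.mem_of_mem_erase hz
  exact div_le_div₀ ((abs_nonneg _).trans (hy z hzs)) (hy z hzs) hh
    (hsep hx hzs (Finset.ne_of_mem_erase hz).symm)

end SeparatedNodes

section Bounds

variable {I : Set ℝ} {n : ℕ} {f : ℝ → ℝ} {s : Finset ℝ} {ε h : ℝ}

theorem mul_pow_le_of_le_abs_iteratedDeriv (hI : IsOpen I) (hIc : I.OrdConnected)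
    (hf : ContDiffOn ℝ n f I) (hs : #s = n + 1) (hsI : ↑s ⊆ I) (hh : 0 < h)
    (hsep : (s : Set ℝ).Pairwise fun x y => h ≤ |x - y|) (hfs : ∀ x ∈ s, |f x| ≤ ε) {A : ℝ}
    (hA : ∀ x ∈ I, A ≤ |iteratedDeriv n f x|) :
    A * h ^ n ≤ (n + 1) * n ! * ε := by
  obtain ⟨ξ, hξ, hξeq⟩ := exists_iteratedDeriv_eq_factorial_mul_sum hI hIc hf hs hsI
  have hsum := abs_sum_div_prod_sub_le hh hsep hfs
  rw [hs, Nat.add_sub_cancel] at hsum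
  have hA' : A ≤ n ! * ((n + 1 : ℕ) * (ε / h ^ n)) := calc
    A ≤ |iteratedDeriv n f ξ| := hA ξ hξ
    _ = n ! * |∑ x ∈ s, f x / ∏ y ∈ s.erase x, (x - y)| := by rw [hξeq, abs_mul, Nat.abs_cast]
    _ ≤ n ! * ((n + 1 : ℕ) * (ε / h ^ n)) := by gcongr
  calc A * h ^ n ≤ n ! * ((n + 1 : ℕ) * (ε / h ^ n)) * h ^ n := by gcongr
    _ = (n + 1) * n ! * ε := by field_simp; push_cast; ring

theorem abs_le_of_abs_iteratedDeriv_le (hI : IsOpen I) (hIc : I.OrdConnected)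
    (hf : ContDiffOn ℝ n f I) (hs : #s = n) (hsI : ↑s ⊆ I) (hh : 0 < h)
    (hsep : (s : Set ℝ).Pairwise fun x y => h ≤ |x - y|) (hfs : ∀ x ∈ s, |f x| ≤ ε) {A L y : ℝ}
    (hA : ∀ x ∈ I, |iteratedDeriv n f x| ≤ A) (hy : y ∈ I) (hyL : ∀ x ∈ s, |y - x| ≤ L) :
    |f y| ≤ n * (ε * (L / h) ^ (n - 1)) + A / n ! * L ^ n := by
  obtain ⟨ξ, hξ, hfy⟩ := exists_eq_eval_interpolate_add hI hIc hf hs hsI hy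
  have hp := abs_eval_interpolate_le hh hsep hfs hyL
  rw [hs] at hp
  have hN : |∏ x ∈ s, (y - x)| ≤ L ^ n := by
    rw [Finset.abs_prod, ← hs, ← Finset.prod_const]
    exact Finset.prod_le_prod (fun _ _ => abs_nonneg _) hyL
  have hD : |iteratedDeriv n f ξ / n !| ≤ A / n ! := by
    rw [abs_div, Nat.abs_cast]
    gcongr
    exact hA ξ hξ
  rw [hfy]
  refine (abs_add_le _ _).trans ?_
  rw [abs_mul]
  exact add_le_add hp (mul_le_mul hD hN (abs_nonneg _) ((abs_nonneg _).trans hD))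

theorem iSup_abs_le_of_abs_iteratedDeriv_le {a b : ℝ} (hab : a ≤ b)
    (hf : ContDiffOn ℝ n f (Ioo a b)) (hs : #s = n) (hsI : ↑s ⊆ Ioo a b) (hh : 0 < h)
    (hsep : (s : Set ℝ).Pairwise fun x y => h ≤ |x - y|) (hε : 0 ≤ ε)
    (hfs : ∀ x ∈ s, |f x| ≤ ε) {A : ℝ} (hA0 : 0 ≤ A)
    (hA : ∀ x ∈ Ioo a b, |iteratedDeriv n f x| ≤ A) :
    ⨆ x ∈ Ioo a b, |f x| ≤ n * (ε * ((b - a) / h) ^ (n - 1)) + A / n ! * (b - a) ^ n := by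
  have hbound : 0 ≤ n * (ε * ((b - a) / h) ^ (n - 1)) + A / n ! * (b - a) ^ n := by
    have := sub_nonneg.mpr hab
    positivity
  refine Real.iSup_le (fun y => Real.iSup_le (fun hy => ?_) hbound) hbound
  refine abs_le_of_abs_iteratedDeriv_le isOpen_Ioo ordConnected_Ioo hf hs hsI hh hsep hfs hA hy
    fun x hx => ?_
  have hx' := hsI hx
  exact abs_sub_le_iff.mpr ⟨by linarith [hx'.1, hy.2], by linarith [hx'.2, hy.1]⟩

end Bounds

theorem exists_finset_pairwise_le_abs_sub {E : Set ℝ} {h : ℝ} (hh : 0 < h) (n : ℕ)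
    (hE : ENNReal.ofReal (2 * n * h) < volume E) :
    ∃ s : Finset ℝ, ↑s ⊆ E ∧ #s = n + 1 ∧ (s : Set ℝ).Pairwise fun x y => h ≤ |x - y| := by
  suffices ∀ m ≤ n + 1, ∃ s : Finset ℝ, ↑s ⊆ E ∧ #s = m ∧
      (s : Set ℝ).Pairwise fun x y => h ≤ |x - y| from this _ le_rfl
  intro m hm
  induction m with
  | zero => exact ⟨∅, by simp, rfl, by simp⟩
  | succ m ih =>
    obtain ⟨s, hsE, hs, hsep⟩ := ih (by omega)
    have hcover : volume (⋃ x ∈ s, Metric.ball x h) < volume E := calc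
      _ ≤ ∑ x ∈ s, volume (Metric.ball x h) := measure_biUnion_finset_le _ _
      _ = ENNReal.ofReal (m * (2 * h)) := by
        rw [Finset.sum_congr rfl fun x _ => Real.volume_ball x h, Finset.sum_const, hs,
          nsmul_eq_mul, ← ENNReal.ofReal_natCast, ← ENNReal.ofReal_mul (by positivity)]
      _ ≤ ENNReal.ofReal (2 * n * h) := ENNReal.ofReal_le_ofReal <| by
        have : (m : ℝ) ≤ n := by exact_mod_cast (by omega : m ≤ n)
        nlinarith
      _ < volume E := hE
    obtain ⟨z, hzE, hz⟩ : ∃ z ∈ E, z ∉ ⋃ x ∈ s, Metric.ball x h :=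
      not_subset.mp fun hsub => (measure_mono hsub).not_gt hcover
    simp only [mem_iUnion, Metric.mem_ball, Real.dist_eq, not_exists, not_lt] at hz
    have hzs : z ∉ s := fun hzs => by simpa [hh.not_ge] using hz z hzs
    refine ⟨insert z s, ?_, by rw [Finset.card_insert_of_notMem hzs, hs], ?_⟩
    · simpa [insert_subset_iff] using ⟨hzE, hsE⟩
    · rw [Finset.coe_insert]
      exact hsep.insert fun x hx _ => ⟨hz x hx, abs_sub_comm x z ▸ hz x hx⟩

theorem two_mul_add_two_pow_mul_le {k : ℕ} (hk : 1 ≤ k) {t : ℝ} (ht : 1 ≤ t) :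
    (2 * k + 2 : ℝ) ^ k * (k + t * (k + 1)) ≤
      (k * (k + 1)) ^ k * (t * (k + 1) * (2 * k ^ k + 1)) := by
  have hnat : 2 ^ k * (2 * k + 1) ≤ k ^ k * ((k + 1) * (2 * k ^ k + 1)) := by
    obtain rfl | hk2 := hk.eq_or_lt
    · norm_num
    calc 2 ^ k * (2 * k + 1) ≤ k ^ k * (2 * k ^ k + 1) := by
          gcongr
          · exact hk2
          · exact Nat.le_self_pow (by omega) k
      _ ≤ k ^ k * ((k + 1) * (2 * k ^ k + 1)) := by
          gcongr
          exact Nat.le_mul_of_pos_left _ (by omega)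
  have hnat' : (2 : ℝ) ^ k * (2 * k + 1) ≤ k ^ k * ((k + 1) * (2 * k ^ k + 1)) := by
    exact_mod_cast hnat
  have hk' : (1 : ℝ) ≤ k := by exact_mod_cast hk
  calc (2 * k + 2 : ℝ) ^ k * (k + t * (k + 1)) ≤ (2 * k + 2) ^ k * (t * (2 * k + 1)) := by
        gcongr; nlinarith
    _ = t * (k + 1) ^ k * (2 ^ k * (2 * k + 1)) := by
        rw [show (2 * k + 2 : ℝ) = 2 * (k + 1) by ring, mul_pow]; ring
    _ ≤ t * (k + 1) ^ k * (k ^ k * ((k + 1) * (2 * k ^ k + 1))) := by gcongr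
    _ = (k * (k + 1)) ^ k * (t * (k + 1) * (2 * k ^ k + 1)) := by rw [mul_pow]; ring

theorem pow_mul_le_of_bounds {k : ℕ} (hk : 1 ≤ k) {A₁ A₂ ε h L S : ℝ} (hA₂ : 0 < A₂)
    (hA : A₂ ≤ A₁) (hε : 0 < ε) (hh : 0 < h) (hhL : h ≤ L)
    (h₁ : A₂ * h ^ k ≤ (k + 1) * k ! * ε)
    (h₂ : S ≤ k * (ε * (L / h) ^ (k - 1)) + A₁ / k ! * L ^ k) :
    ((2 * k + 2) * h) ^ k * S ≤
      (k * (k + 1)) ^ k * ((A₁ / A₂) * (k + 1) * (2 * k ^ k + 1)) * ε * L ^ k := by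
  set t := A₁ / A₂
  have ht : 1 ≤ t := (one_le_div hA₂).mpr hA
  have hL0 : 0 < L := hh.trans_le hhL
  have hL : L ^ k = L * L ^ (k - 1) := by rw [← pow_succ', Nat.sub_add_cancel hk]
  have e : h ^ k * (L / h) ^ (k - 1) = h * L ^ (k - 1) := by
    rw [div_pow, show h ^ k = h * h ^ (k - 1) by rw [← pow_succ', Nat.sub_add_cancel hk]]
    field_simp
  have hhk : h ^ k * S ≤ ε * L ^ k * (k + t * (k + 1)) := calc
    h ^ k * S ≤ h ^ k * (k * (ε * (L / h) ^ (k - 1)) + A₁ / k ! * L ^ k) := by gcongr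
    _ = k * ε * (h * L ^ (k - 1)) + t * (A₂ * h ^ k) / k ! * L ^ k := by
        rw [← e]; simp only [t]; field_simp
    _ ≤ k * ε * (L * L ^ (k - 1)) + t * ((k + 1) * k ! * ε) / k ! * L ^ k := by gcongr
    _ = ε * L ^ k * (k + t * (k + 1)) := by rw [hL]; field_simp
  calc ((2 * k + 2) * h) ^ k * S = (2 * k + 2) ^ k * (h ^ k * S) := by rw [mul_pow]; ring
    _ ≤ (2 * k + 2) ^ k * (ε * L ^ k * (k + t * (k + 1))) := by gcongr
    _ = (2 * k + 2) ^ k * (k + t * (k + 1)) * (ε * L ^ k) := by ring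
    _ ≤ (k * (k + 1)) ^ k * (t * (k + 1) * (2 * k ^ k + 1)) * (ε * L ^ k) :=
        mul_le_mul_of_nonneg_right (two_mul_add_two_pow_mul_le hk ht) (by positivity)
    _ = _ := by ring

theorem le_mul_rpow_mul_of_pow_mul_le {k : ℕ} (hk : k ≠ 0) {m c W ε S L : ℝ}
    (hc : 0 ≤ c) (hW : 0 ≤ W) (hε : 0 ≤ ε) (hS : 0 < S) (hL : 0 ≤ L)
    (h : m ^ k * S ≤ c ^ k * W * ε * L ^ k) :
    m ≤ c * W ^ ((1 : ℝ) / k) * (ε / S) ^ ((1 : ℝ) / k) * L := by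
  refine le_of_pow_le_pow_left₀ hk (by positivity) ?_
  rw [mul_pow, mul_pow, mul_pow, one_div, Real.rpow_inv_natCast_pow hW hk,
    Real.rpow_inv_natCast_pow (by positivity) hk]
  calc m ^ k = m ^ k * S / S := by field_simp
    _ ≤ c ^ k * W * ε * L ^ k / S := by gcongr
    _ = c ^ k * W * (ε / S) * L ^ k := by ring

theorem toReal_volume_abs_lt_le {k : ℕ} (hk : 1 ≤ k) {f : ℝ → ℝ} {a b : ℝ}
    (hf : ContDiffOn ℝ k f (Ioo a b)) {A₁ A₂ : ℝ} (hA₂ : 0 < A₂)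
    (hle : ∀ x ∈ Ioo a b, |iteratedDeriv k f x| ≤ A₁)
    (hge : ∀ x ∈ Ioo a b, A₂ ≤ |iteratedDeriv k f x|) {ε : ℝ} (hε : 0 < ε)
    (hS : 0 < ⨆ x ∈ Ioo a b, |f x|) :
    (volume {x ∈ Ioo a b | |f x| < ε}).toReal ≤
      k * (k + 1) * ((A₁ / A₂) * (k + 1) * (2 * k ^ k + 1)) ^ ((1 : ℝ) / k) *
        (ε / ⨆ x ∈ Ioo a b, |f x|) ^ ((1 : ℝ) / k) * (b - a) := by
  set E := {x ∈ Ioo a b | |f x| < ε}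
  set m := (volume E).toReal
  obtain ⟨x₀, hx₀⟩ : (Ioo a b).Nonempty := by
    by_contra hempty
    simp [not_nonempty_iff_eq_empty.mp hempty] at hS
  have hab : a < b := hx₀.1.trans hx₀.2
  have hA : A₂ ≤ A₁ := (hge x₀ hx₀).trans (hle x₀ hx₀)
  have hA₁ : 0 < A₁ := hA₂.trans_le hA
  have hEfin : volume E ≠ ⊤ := ((measure_mono (sep_subset _ _)).trans_lt (by simp)).ne
  have hmL : m ≤ b - a := ENNReal.toReal_le_of_le_ofReal (by linarith)
    ((measure_mono (sep_subset _ _)).trans_eq Real.volume_Ioo)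
  rcases (show 0 ≤ m from ENNReal.toReal_nonneg).eq_or_lt with hm | hm
  · rw [← hm]
    positivity
  set h := m / (2 * k + 2)
  have hh : 0 < h := by positivity
  have hmh : m = (2 * k + 2) * h := by simp only [h]; field_simp
  have hhL : h ≤ b - a := (div_le_self hm.le (by norm_cast; omega)).trans hmL
  obtain ⟨s, hsE, hs, hsep⟩ := exists_finset_pairwise_le_abs_sub hh k <| by
    rw [← ENNReal.ofReal_toReal hEfin, ENNReal.ofReal_lt_ofReal_iff hm]
    nlinarith
  have hsI : (s : Set ℝ) ⊆ Ioo a b := hsE.trans (sep_subset _ _)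
  have hfs : ∀ x ∈ s, |f x| ≤ ε := fun x hx => (hsE hx).2.le
  have hlow := mul_pow_le_of_le_abs_iteratedDeriv isOpen_Ioo ordConnected_Ioo hf hs hsI hh hsep
    hfs hge
  obtain ⟨x₁, hx₁⟩ := Finset.card_pos.mp (by omega : 0 < #s)
  have herase : (s.erase x₁ : Set ℝ) ⊆ s := Finset.coe_subset.mpr (s.erase_subset x₁)
  have hsup := iSup_abs_le_of_abs_iteratedDeriv_le hab.le hf
    (by rw [Finset.card_erase_of_mem hx₁, hs, Nat.add_sub_cancel]) (herase.trans hsI) hh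
    (hsep.mono herase) hε.le (fun x hx => hfs x (Finset.mem_of_mem_erase hx)) hA₁.le hle
  have hpow := pow_mul_le_of_bounds hk hA₂ hA hε hh hhL hlow hsup
  rw [← hmh] at hpow
  exact le_mul_rpow_mul_of_pow_mul_le (by omega) (by positivity) (by positivity) hε.le hS
    (by linarith) hpow

theorem volume_abs_lt_le {k : ℕ} (hk : 1 ≤ k) {f : ℝ → ℝ} {a b : ℝ}
    (hf : ContDiffOn ℝ k f (Ioo a b)) {A₁ A₂ : ℝ} (hA₂ : 0 < A₂)
    (hle : ∀ x ∈ Ioo a b, |iteratedDeriv k f x| ≤ A₁)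
    (hge : ∀ x ∈ Ioo a b, A₂ ≤ |iteratedDeriv k f x|) {ε : ℝ} (hε : 0 < ε) :
    volume {x ∈ Ioo a b | |f x| < ε} ≤
      ENNReal.ofReal ((k : ℝ) * (k + 1) * ((A₁ / A₂) * (k + 1) * (2 * k ^ k + 1)) ^ ((1 : ℝ) / k)) *
        (ENNReal.ofReal ε / ENNReal.ofReal (⨆ x ∈ Ioo a b, |f x|)) ^ ((1 : ℝ) / k) *
        volume (Ioo a b) := by
  rcases eq_or_ne (volume {x ∈ Ioo a b | |f x| < ε}) 0 with hE | hE
  · rw [hE]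
    exact zero_le
  obtain ⟨x₀, hx₀, -⟩ := nonempty_of_measure_ne_zero hE
  have hA₁ : 0 < A₁ := hA₂.trans_le ((hge x₀ hx₀).trans (hle x₀ hx₀))
  have hab : a < b := hx₀.1.trans hx₀.2
  rcases (show 0 ≤ ⨆ x ∈ Ioo a b, |f x| from
    Real.iSup_nonneg fun x => Real.iSup_nonneg fun _ => abs_nonneg (f x)).eq_or_lt with hS | hS
  · rw [← hS, ENNReal.ofReal_zero, ENNReal.div_zero (by simpa using hε),
      ENNReal.top_rpow_of_pos (by positivity), ENNReal.mul_top (by simp; positivity),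
      ENNReal.top_mul (by simpa [Real.volume_Ioo] using hab)]
    exact le_top
  calc volume {x ∈ Ioo a b | |f x| < ε}
      = ENNReal.ofReal (volume {x ∈ Ioo a b | |f x| < ε}).toReal :=
        (ENNReal.ofReal_toReal ((measure_mono (sep_subset _ _)).trans_lt (by simp)).ne).symm
    _ ≤ _ := ENNReal.ofReal_le_ofReal (toReal_volume_abs_lt_le hk hf hA₂ hle hge hε hS)
    _ = _ := by
      rw [ENNReal.ofReal_mul (by positivity), ENNReal.ofReal_mul (by positivity),
        ← ENNReal.ofReal_rpow_of_nonneg (by positivity) (by positivity),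
        ENNReal.ofReal_div_of_pos hS, Real.volume_Ioo]

theorem stmt9_general (V : Set ℝ) (hV : IsOpen V) (k : ℕ) (hk : 1 ≤ k) (f : ℝ → ℝ)
    (hf : ContDiffOn ℝ k f V) (A₁ A₂ : ℝ) (hA₂ : 0 < A₂)
    (hder_le : ∀ x ∈ V, ∀ j ≤ k, |iteratedDerivWithin j f V x| ≤ A₁)
    (hder_ge : ∀ x ∈ V, A₂ ≤ |iteratedDerivWithin k f V x|)
    (a b : ℝ) (hB : Set.Ioo a b ⊆ V) (ε : ℝ) (hε : 0 < ε) :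
    volume {x ∈ Set.Ioo a b | |f x| < ε} ≤
      ENNReal.ofReal ((k : ℝ) * (k + 1) * ((A₁ / A₂) * (k + 1) * (2 * k ^ k + 1)) ^ ((1 : ℝ) / k)) *
        (ENNReal.ofReal ε / ENNReal.ofReal (⨆ x ∈ Set.Ioo a b, |f x|)) ^ ((1 : ℝ) / k) *
        volume (Set.Ioo a b) := by
  have hderiv : ∀ x ∈ Ioo a b, iteratedDerivWithin k f V x = iteratedDeriv k f x :=
    fun x hx => iteratedDerivWithin_of_isOpen hV (hB hx)
  exact volume_abs_lt_le hk (hf.mono hB) hA₂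
    (fun x hx => hderiv x hx ▸ hder_le x (hB hx) k le_rfl)
    (fun x hx => hderiv x hx ▸ hder_ge x (hB hx)) hε

/-- Lemma 3.3, case d = 1: Let `V ⊂ ℝ` be open, `k ≥ 1`, `f ∈ C^k(V)` with
`|∂^j f| ≤ A₁` on `V` for all `j ≤ k` and `|f^{(k)}| ≥ A₂` on `V`.  Then for any open
interval `B ⊂ V` and any `ε > 0`,
`|{x ∈ B : |f(x)| < ε}| ≤ C_{k,A₁,A₂} · (ε / sup_B |f|)^{1/k} · |B|`, where
`C_{k,A₁,A₂} = k(k+1)·((A₁/A₂)(k+1)(2k^k+1))^{1/k}`.  (The quotient `ε / sup_B |f|` is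
taken in `ℝ≥0∞`, so that `ε/0 = ∞`.) -/
theorem stmt9 (V : Set ℝ) (hV : IsOpen V) (k : ℕ) (hk : 1 ≤ k) (f : ℝ → ℝ)
    (hf : ContDiffOn ℝ k f V) (A₁ A₂ : ℝ) (hA₁ : 0 < A₁) (hA₂ : 0 < A₂)
    (hder_le : ∀ x ∈ V, ∀ j ≤ k, |iteratedDerivWithin j f V x| ≤ A₁)
    (hder_ge : ∀ x ∈ V, A₂ ≤ |iteratedDerivWithin k f V x|)
    (a b : ℝ) (hB : Set.Ioo a b ⊆ V) (ε : ℝ) (hε : 0 < ε) :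
    volume {x ∈ Set.Ioo a b | |f x| < ε} ≤
      ENNReal.ofReal ((k : ℝ) * (k + 1) * ((A₁ / A₂) * (k + 1) * (2 * k ^ k + 1)) ^ ((1 : ℝ) / k)) *
        (ENNReal.ofReal ε / ENNReal.ofReal (⨆ x ∈ Set.Ioo a b, |f x|)) ^ ((1 : ℝ) / k) *
        volume (Set.Ioo a b) :=
  stmt9_general V hV k hk f hf A₁ A₂ hA₂ hder_le hder_ge a b hB ε hε
end

section
/- Suppose 1, f₁, …, fₙ ∈ C^m(U) are analytic (real-analytic) on a connected open domain U ⊂ ℝ^d. Then 1, f₁, …, fₙ are linearly independent over ℝ if and only if every point of U is nondegenerate for f = (f₁,…,fₙ), i.e. for every x ∈ U the partial derivatives of f at x of all orders ≥ 1 span ℝⁿ. -/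
/-!
A linear functional `ℓ` annihilates every partial derivative of order `≥ 1` of `f` at `x` exactly
when all derivatives of order `≥ 1` of the analytic function `ℓ ∘ f` vanish at `x`; by the
identity theorem on the connected set `U`, this happens exactly when `ℓ ∘ f` is constant on `U`,
i.e. when `c₀ + ℓ ∘ f ≡ 0` on `U` for some `c₀`. Nondegeneracy at a point says that only `ℓ = 0`
annihilates those derivatives, linear independence that only `ℓ = 0` makes `ℓ ∘ f` constant.
-/

open Set Topology Submodule
open scoped ContDiff

theorem Submodule.span_eq_top_iff_forall_dotProduct_eq_zero {K ι : Type*} [Field K] [Fintype ι]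
    [DecidableEq ι] {S : Set (ι → K)} :
    span K S = ⊤ ↔ ∀ c : ι → K, (∀ v ∈ S, c ⬝ᵥ v = 0) → c = 0 := by
  rw [← dualAnnihilator_eq_bot_iff, eq_bot_iff, SetLike.le_def]
  simp only [← SetLike.mem_coe, coe_dualAnnihilator_span]
  refine ((dotProductEquiv K ι).toEquiv.forall_congr fun c => ?_).symm
  simp [Set.subset_def]

section Analytic

variable {𝕜 : Type*} [NontriviallyNormedField 𝕜] [CharZero 𝕜]
  {E F : Type*} [NormedAddCommGroup E] [NormedSpace 𝕜 E]
  [NormedAddCommGroup F] [NormedSpace 𝕜 F] [CompleteSpace F] {g : E → F} {x : E}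

theorem AnalyticAt.eventuallyEq_of_iteratedFDeriv_eq_zero (hg : AnalyticAt 𝕜 g x)
    (h : ∀ m, 1 ≤ m → iteratedFDeriv 𝕜 m g x = 0) : g =ᶠ[𝓝 x] fun _ => g x := by
  obtain ⟨p, r, hp⟩ := hg
  have hball : ∀ y ∈ Metric.eball (0 : E) r, g (x + y) = g x := by
    intro y hy
    refine (hp.hasSum_iteratedFDeriv hy).unique (hasSum_single 0 fun m hm => ?_) |>.trans ?_
    · rw [h m (Nat.one_le_iff_ne_zero.mpr hm)]
      simp
    · simp
  filter_upwards [Metric.eball_mem_nhds x hp.r_pos] with z hz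
  simpa using hball (z - x) (by simpa [edist_eq_enorm_sub] using hz)

theorem AnalyticOnNhd.eqOn_of_iteratedFDerivWithin_eq_zero {U : Set E}
    (hg : AnalyticOnNhd 𝕜 g U) (hU : IsOpen U) (hUc : IsPreconnected U) (hx : x ∈ U)
    (h : ∀ m, 1 ≤ m → iteratedFDerivWithin 𝕜 m g U x = 0) : EqOn g (fun _ => g x) U :=
  hg.eqOn_of_preconnected_of_eventuallyEq analyticOnNhd_const hUc hx <|
    (hg x hx).eventuallyEq_of_iteratedFDeriv_eq_zero fun m hm =>
      (iteratedFDerivWithin_of_isOpen m hU hx).symm.trans (h m hm)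

end Analytic

section PartialDerivs

variable {𝕜 : Type*} [NontriviallyNormedField 𝕜] {ι E F G : Type*}
  [NormedAddCommGroup E] [NormedSpace 𝕜 E] [NormedAddCommGroup F] [NormedSpace 𝕜 F]
  [NormedAddCommGroup G] [NormedSpace 𝕜 G]

theorem ContinuousMultilinearMap.eq_zero_iff_forall_basis {κ : Type*} [Finite κ]
    (b : Module.Basis ι 𝕜 E) (M : ContinuousMultilinearMap 𝕜 (fun _ : κ => E) G) :
    M = 0 ↔ ∀ j : κ → ι, M (fun k => b (j k)) = 0 := by
  refine ⟨fun h j => by simp [h], fun h => ?_⟩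
  refine ContinuousMultilinearMap.toMultilinearMap_injective ?_
  exact Module.Basis.ext_multilinear (fun _ => b) fun j => by simpa using h j

def higherPartialDerivs (b : Module.Basis ι 𝕜 E) (f : E → F) (s : Set E) (x : E) : Set F :=
  {v | ∃ m, 1 ≤ m ∧ ∃ j : Fin m → ι, v = iteratedFDerivWithin 𝕜 m f s x fun k => b (j k)}

theorem forall_map_higherPartialDerivs_eq_zero_iff {f : E → F} {s : Set E} {x : E}
    (b : Module.Basis ι 𝕜 E) (ℓ : F →L[𝕜] G) (hf : ContDiffWithinAt 𝕜 ∞ f s x)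
    (hs : UniqueDiffOn 𝕜 s) (hx : x ∈ s) :
    (∀ v ∈ higherPartialDerivs b f s x, ℓ v = 0) ↔
      ∀ m, 1 ≤ m → iteratedFDerivWithin 𝕜 m (ℓ ∘ f) s x = 0 := by
  have hcomp (m : ℕ) := ℓ.iteratedFDerivWithin_comp_left hf hs hx (i := m) (mod_cast le_top)
  simp only [higherPartialDerivs, mem_ofPred_eq, forall_exists_index, and_imp, hcomp,
    ContinuousMultilinearMap.eq_zero_iff_forall_basis b,
    ContinuousLinearMap.compContinuousMultilinearMap_coe, Function.comp_apply]
  exact ⟨fun h m hm j => h _ m hm j rfl, by rintro h _ m hm j rfl; exact h m hm j⟩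

end PartialDerivs

/-- Let `f = (f₁,…,fₙ)` be real-analytic on a connected open domain
`U ⊂ ℝ^d`.  Then `1, f₁, …, fₙ` are linearly independent over `ℝ` (no nontrivial linear
combination `c₀ + Σᵢ cᵢ fᵢ` vanishes identically on `U`) if and only if every point of `U`
is nondegenerate, i.e. for every `x ∈ U` the partial derivatives `∂_β f(x)` over all
multiindices `β` with `|β| ≥ 1` span `ℝⁿ`. -/
theorem stmt12 {d n : ℕ} (U : Set (EuclideanSpace ℝ (Fin d))) (hU : IsOpen U)
    (hUconn : IsPreconnected U) (hUne : U.Nonempty)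
    (f : EuclideanSpace ℝ (Fin d) → (Fin n → ℝ)) (hf : AnalyticOnNhd ℝ f U) :
    (∀ (c₀ : ℝ) (c : Fin n → ℝ),
        (∀ x ∈ U, c₀ + ∑ i, c i * f x i = 0) → c₀ = 0 ∧ c = 0) ↔
      (∀ x ∈ U, Submodule.span ℝ
        {v : Fin n → ℝ | ∃ m : ℕ, 1 ≤ m ∧ ∃ j : Fin m → Fin d,
          v = iteratedFDerivWithin ℝ m f U x
            (fun s => EuclideanSpace.single (j s) 1)} = ⊤) := by
  let b := (EuclideanSpace.basisFun (Fin d) ℝ).toBasis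
  let ℓ (c : Fin n → ℝ) : (Fin n → ℝ) →L[ℝ] ℝ :=
    LinearMap.toContinuousLinearMap (dotProductEquiv ℝ (Fin n) c)
  have hpartials (x) : {v : Fin n → ℝ | ∃ m : ℕ, 1 ≤ m ∧ ∃ j : Fin m → Fin d,
      v = iteratedFDerivWithin ℝ m f U x (fun s => EuclideanSpace.single (j s) 1)} =
      higherPartialDerivs b f U x := by
    simp [higherPartialDerivs, b]
  have hvanish (c : Fin n → ℝ) {x} (hx : x ∈ U) :=
    forall_map_higherPartialDerivs_eq_zero_iff b (ℓ c) (hf.contDiffOn hU.uniqueDiffOn x hx)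
      hU.uniqueDiffOn hx
  simp only [hpartials, span_eq_top_iff_forall_dotProduct_eq_zero]
  constructor
  · intro hli x hx c hc
    have hconst : EqOn (ℓ c ∘ f) (fun _ => c ⬝ᵥ f x) U :=
      AnalyticOnNhd.eqOn_of_iteratedFDerivWithin_eq_zero
        (fun y hy => ((ℓ c).analyticAt _).comp (hf y hy)) hU hUconn hx ((hvanish c hx).1 hc)
    refine (hli (-(c ⬝ᵥ f x)) c fun y hy => ?_).2
    have hy' : c ⬝ᵥ f y = c ⬝ᵥ f x := hconst hy
    change -(c ⬝ᵥ f x) + c ⬝ᵥ f y = 0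
    rw [hy', neg_add_cancel]
  · intro hspan c₀ c hc
    obtain ⟨x, hx⟩ := hUne
    have hconst : EqOn (ℓ c ∘ f) (fun _ => -c₀) U := fun y hy =>
      eq_neg_of_add_eq_zero_right (hc y hy)
    have hc0 : c = 0 := hspan x hx c <| (hvanish c hx).2 fun m hm => by
      rw [iteratedFDerivWithin_congr hconst hx, iteratedFDerivWithin_const_of_ne (by omega)]
      rfl
    exact ⟨by simpa [hc0] using hc x hx, hc0⟩
end
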